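/- arXiv:1210.8059 — 5 statements merged into one kernel-verified Lean document; each statement's English description precedes it below -/
import Mathlib

section
/- Let n ≥ 1 and let φ : ℂⁿ → ℝ be a smooth function on a neighborhood of a point w = (w_1, …, w_n) ∈ ℂⁿ. Then there exist constants C > 0 and k₀ ≥ 1 such that the following holds: for every k ≥ k₀ and every function f holomorphic on a neighborhood of the closed polydisc U_k(w) = {z ∈ ℂⁿ : |z_j − w_j| ≤ 1/√k for j = 1, …, n}, the function g(z) = |f(z)|² e^{−kφ(z)} satisfies ‖Dg(w)‖ ≤ C √k · sup_{z ∈ U_k(w)} g(z), where Dg(w) denotes the Fréchet derivative (over ℝ) of g at w. -/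
open Metric in
lemma cauchyBound' {F : ℂ → ℂ} {S : Set ℂ} (_hS : IsOpen S) {c : ℂ} {R B : ℝ} (hR : 0 < R)
    (hsub : closedBall c R ⊆ S) (hF : DifferentiableOn ℂ F S)
    (hB : ∀ z ∈ closedBall c R, ‖F z‖ ≤ B) : ‖deriv F c‖ ≤ B / R := by
  have hcl : DifferentiableOn ℂ F (closure (ball c R)) := by
    rw [closure_ball c hR.ne']; exact hF.mono hsub
  exact Complex.norm_deriv_le_of_forall_mem_sphere_norm_le hR hcl.diffContOnCl
    (fun z hz => hB z (sphere_subset_closedBall hz))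

set_option maxHeartbeats 1600000 in
/-- Gradient estimate: if `φ` is smooth on a neighborhood of `w ∈ ℂⁿ`, then there are `C > 0`
and `k₀ ≥ 1` such that for every `k ≥ k₀` and every `f` holomorphic on a neighborhood of the
closed polydisc `U_k(w) = {z : |z_j − w_j| ≤ 1/√k}`, the function `g = |f|² e^{−kφ}`
satisfies `‖Dg(w)‖ ≤ C √k · sup_{U_k(w)} g`. -/
theorem stmt_6 (n : ℕ) (hn : 1 ≤ n) (w : Fin n → ℂ) (φ : (Fin n → ℂ) → ℝ)
    (V : Set (Fin n → ℂ)) (hV : V ∈ nhds w) (hφ : ContDiffOn ℝ (⊤ : ℕ∞) φ V) :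
    ∃ C : ℝ, 0 < C ∧ ∃ k₀ : ℕ, 1 ≤ k₀ ∧ ∀ k : ℕ, k₀ ≤ k →
      ∀ (f : (Fin n → ℂ) → ℂ) (W : Set (Fin n → ℂ)), IsOpen W →
        {z : Fin n → ℂ | ∀ j, ‖z j - w j‖ ≤ 1 / Real.sqrt k} ⊆ W →
        DifferentiableOn ℂ f W →
        ∀ M : ℝ,
          (∀ z ∈ {z : Fin n → ℂ | ∀ j, ‖z j - w j‖ ≤ 1 / Real.sqrt k},
            ‖f z‖ ^ 2 * Real.exp (-(k : ℝ) * φ z) ≤ M) →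
          ‖fderiv ℝ (fun z => ‖f z‖ ^ 2 * Real.exp (-(k : ℝ) * φ z)) w‖
            ≤ C * Real.sqrt k * M := by
  classical
  have hUo : IsOpen (interior V) := isOpen_interior
  have hwU : w ∈ interior V := mem_interior_iff_mem_nhds.2 hV
  have hφU : ContDiffOn ℝ (⊤ : ℕ∞) φ (interior V) := hφ.mono interior_subset
  have hφw : ContDiffAt ℝ (⊤ : ℕ∞) φ w := hφU.contDiffAt (hUo.mem_nhds hwU)
  set Dφ := fderiv ℝ φ w with hDφdef
  have h1 : ContDiffAt ℝ 1 (fderiv ℝ φ) w := hφw.fderiv_right (by exact WithTop.coe_le_coe.2 le_top)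
  obtain ⟨K, t, ht, hlip⟩ := h1.exists_lipschitzOnWith
  obtain ⟨r, hr0, hrsub⟩ : ∃ r > 0, Metric.closedBall w r ⊆ t ∩ interior V := by
    have : t ∩ interior V ∈ nhds w := Filter.inter_mem ht (hUo.mem_nhds hwU)
    exact Metric.nhds_basis_closedBall.mem_iff.1 this
  have hdiff : ∀ x ∈ Metric.closedBall w r, HasFDerivAt φ (fderiv ℝ φ x) x := fun x hx =>
    ((hφU.differentiableOn (by simp)).differentiableAt
      (hUo.mem_nhds (hrsub hx).2)).hasFDerivAt
  -- Taylor bound with quadratic remainder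
  have htaylor : ∀ z ∈ Metric.closedBall w r, |φ z - φ w - Dφ (z - w)| ≤ K * ‖z - w‖ ^ 2 := by
    intro z hz
    have hzr : ‖z - w‖ ≤ r := by rwa [← dist_eq_norm, ← Metric.mem_closedBall]
    have hsub2 : Metric.closedBall w ‖z - w‖ ⊆ Metric.closedBall w r :=
      Metric.closedBall_subset_closedBall hzr
    set h : (Fin n → ℂ) → ℝ := fun x => φ x - Dφ (x - w) with hh
    have hd : ∀ x ∈ Metric.closedBall w ‖z - w‖,
        HasFDerivWithinAt h (fderiv ℝ φ x - Dφ) (Metric.closedBall w ‖z - w‖) x := by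
      intro x hx
      have h2 : HasFDerivAt (fun x => Dφ (x - w)) Dφ x := by
        have : (fun x : Fin n → ℂ => Dφ (x - w)) = fun x => Dφ x - Dφ w := by
          funext y; rw [map_sub]
        rw [this]; exact Dφ.hasFDerivAt.sub_const (Dφ w)
      exact ((hdiff x (hsub2 hx)).sub h2).hasFDerivWithinAt
    have hbound : ∀ x ∈ Metric.closedBall w ‖z - w‖, ‖fderiv ℝ φ x - Dφ‖ ≤ (K : ℝ) * ‖z - w‖ := by
      intro x hx
      have hxt : x ∈ t := (hrsub (hsub2 hx)).1
      have hwt : w ∈ t := (hrsub (Metric.mem_closedBall_self hr0.le)).1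
      calc ‖fderiv ℝ φ x - Dφ‖ = dist (fderiv ℝ φ x) (fderiv ℝ φ w) := by
            rw [dist_eq_norm, hDφdef]
        _ ≤ K * dist x w := hlip.dist_le_mul x hxt w hwt
        _ ≤ K * ‖z - w‖ := by
            have := Metric.mem_closedBall.1 hx
            exact mul_le_mul_of_nonneg_left (by rwa [dist_eq_norm] at this) K.coe_nonneg
    have := Convex.norm_image_sub_le_of_norm_hasFDerivWithin_le hd hbound
      (convex_closedBall w ‖z - w‖) (Metric.mem_closedBall_self (norm_nonneg _))
      (by rw [Metric.mem_closedBall, dist_eq_norm])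
    have hcalc : h z - h w = φ z - φ w - Dφ (z - w) := by
      simp only [hh, sub_self, map_zero, sub_zero]; ring
    rw [Real.norm_eq_abs, hcalc] at this
    calc |φ z - φ w - Dφ (z - w)| ≤ (K : ℝ) * ‖z - w‖ * ‖z - w‖ := this
      _ = K * ‖z - w‖ ^ 2 := by ring
  -- the conjugate-linear representation of Dφ
  set a : Fin n → ℂ := fun j =>
    ((Dφ (Pi.single j 1) : ℝ) : ℂ) - ((Dφ (Pi.single j Complex.I) : ℝ) : ℂ) * Complex.I with ha
  set ℓ : (Fin n → ℂ) →L[ℂ] ℂ := ∑ j, a j • ContinuousLinearMap.proj j with hℓdef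
  have hℓ : ∀ v, ℓ v = ∑ j, a j * v j := by
    intro v
    simp [hℓdef, ContinuousLinearMap.sum_apply, ContinuousLinearMap.smul_apply,
      ContinuousLinearMap.proj_apply, smul_eq_mul]
  have hkey : ∀ v, (ℓ v).re = Dφ v := by
    intro v
    have hsingle : ∀ j, (Pi.single j (v j) : Fin n → ℂ) =
        (v j).re • (Pi.single j (1 : ℂ) : Fin n → ℂ)
          + (v j).im • (Pi.single j Complex.I : Fin n → ℂ) := by
      intro j
      rw [← Pi.single_smul, ← Pi.single_smul, ← Pi.single_add]
      congr 1
      simp [Complex.real_smul, Complex.mul_I_re]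
    have hv : v = ∑ j, Pi.single j (v j) := (Finset.univ_sum_single v).symm
    calc (ℓ v).re = ∑ j, (a j * v j).re := by
          rw [hℓ]; exact Complex.re_sum Finset.univ _
      _ = ∑ j, ((v j).re * Dφ (Pi.single j 1) + (v j).im * Dφ (Pi.single j Complex.I)) := by
          refine Finset.sum_congr rfl fun j _ => ?_
          simp [ha, Complex.mul_re, Complex.sub_re, Complex.sub_im, Complex.mul_im]
          ring
      _ = ∑ j, Dφ (Pi.single j (v j)) := by
          refine Finset.sum_congr rfl fun j _ => ?_
          rw [hsingle j, map_add, map_smul, map_smul, smul_eq_mul, smul_eq_mul]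
      _ = Dφ v := by rw [← map_sum]; exact congrArg Dφ hv.symm
  refine ⟨2 * Real.exp K + 1, by positivity, max 1 ⌈r⁻¹ ^ 2⌉₊, le_max_left _ _, ?_⟩
  intro k hk f W hWo hWsub hf M hM
  have hk1 : 1 ≤ k := le_trans (le_max_left _ _) hk
  have hkpos : (0 : ℝ) < k := by exact_mod_cast hk1
  have hsk : 0 < Real.sqrt k := Real.sqrt_pos.2 hkpos
  set ρ : ℝ := 1 / Real.sqrt k with hρdef
  have hρ0 : 0 < ρ := by positivity
  have hρr : ρ ≤ r := by
    have hkr : r⁻¹ ^ 2 ≤ (k : ℝ) := by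
      calc r⁻¹ ^ 2 ≤ (⌈r⁻¹ ^ 2⌉₊ : ℝ) := Nat.le_ceil _
        _ ≤ (k : ℝ) := by exact_mod_cast le_trans (le_max_right _ _) hk
    have : r⁻¹ ≤ Real.sqrt k := by
      rw [show r⁻¹ = Real.sqrt (r⁻¹ ^ 2) by rw [Real.sqrt_sq (by positivity)]]
      exact Real.sqrt_le_sqrt hkr
    rw [hρdef, div_le_iff₀ hsk]
    calc (1 : ℝ) = r * r⁻¹ := (mul_inv_cancel₀ hr0.ne').symm
      _ ≤ r * Real.sqrt k := by nlinarith
  have hρsq : (k : ℝ) * ρ ^ 2 = 1 := by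
    rw [hρdef, div_pow, one_pow, Real.sq_sqrt hkpos.le]
    field_simp
  -- the polydisc is the closed ball for the sup norm
  have hPball : {z : Fin n → ℂ | ∀ j, ‖z j - w j‖ ≤ 1 / Real.sqrt k} = Metric.closedBall w ρ := by
    ext z
    simp only [Set.mem_setOf_eq, Metric.mem_closedBall, ← hρdef]
    rw [dist_pi_le_iff hρ0.le]
    simp [dist_eq_norm]
  have hwP : w ∈ Metric.closedBall w ρ := Metric.mem_closedBall_self hρ0.le
  have hPr : Metric.closedBall w ρ ⊆ Metric.closedBall w r :=
    Metric.closedBall_subset_closedBall hρr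
  rw [hPball] at hWsub hM
  have hwW : w ∈ W := hWsub hwP
  have hM0 : 0 ≤ M := le_trans (by positivity) (hM w hwP)
  -- the holomorphic comparison function
  set F : (Fin n → ℂ) → ℂ := fun z =>
    f z * Complex.exp (((-(k : ℝ) / 2 : ℝ) : ℂ) * (((φ w : ℝ) : ℂ) + ℓ (z - w))) with hFdef
  set ψ : (Fin n → ℂ) → ℝ := fun z => (k : ℝ) * (φ w + (ℓ (z - w)).re - φ z) with hψdef
  have hψw : ψ w = 0 := by simp [hψdef]
  have hgF : ∀ z, ‖f z‖ ^ 2 * Real.exp (-(k : ℝ) * φ z) = ‖F z‖ ^ 2 * Real.exp (ψ z) := by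
    intro z
    have hre : ((((-(k : ℝ) / 2 : ℝ) : ℂ)) * (((φ w : ℝ) : ℂ) + ℓ (z - w))).re
        = (-(k : ℝ) / 2) * (φ w + (ℓ (z - w)).re) := by
      simp [Complex.mul_re]
    rw [hFdef]
    simp only [norm_mul, mul_pow, Complex.norm_exp, hre]
    have h2 : Real.exp ((-(k : ℝ) / 2) * (φ w + (ℓ (z - w)).re)) ^ 2 * Real.exp (ψ z)
        = Real.exp (-(k : ℝ) * φ z) := by
      rw [pow_two, ← Real.exp_add, ← Real.exp_add, hψdef]
      congr 1
      ring
    rw [mul_assoc, h2]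
  -- bound on ψ over the polydisc
  have hψbound : ∀ z ∈ Metric.closedBall w ρ, |ψ z| ≤ (K : ℝ) := by
    intro z hz
    have hzr : z ∈ Metric.closedBall w r := hPr hz
    have h1 : |ψ z| = (k : ℝ) * |φ z - φ w - Dφ (z - w)| := by
      rw [hψdef, abs_mul, abs_of_nonneg (by positivity : (0:ℝ) ≤ (k:ℝ))]
      congr 1
      rw [hkey, ← abs_neg]
      congr 1
      ring
    rw [h1]
    calc (k : ℝ) * |φ z - φ w - Dφ (z - w)| ≤ (k : ℝ) * ((K : ℝ) * ‖z - w‖ ^ 2) :=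
          mul_le_mul_of_nonneg_left (htaylor z hzr) hkpos.le
      _ ≤ (k : ℝ) * ((K : ℝ) * ρ ^ 2) := by
          have hzw : ‖z - w‖ ≤ ρ := by
            rw [← dist_eq_norm]; exact Metric.mem_closedBall.1 hz
          have h5 : ‖z - w‖ ^ 2 ≤ ρ ^ 2 := pow_le_pow_left₀ (norm_nonneg _) hzw 2
          exact mul_le_mul_of_nonneg_left
            (mul_le_mul_of_nonneg_left h5 K.coe_nonneg) hkpos.le
      _ = (K : ℝ) := by
          rw [show (k : ℝ) * ((K : ℝ) * ρ ^ 2) = (K : ℝ) * ((k : ℝ) * ρ ^ 2) by ring,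
            hρsq, mul_one]
  -- bound on F over the polydisc
  set SF : ℝ := Real.sqrt (Real.exp K * M) with hSFdef
  have hFsq : ∀ z, ‖F z‖ ^ 2 = (‖f z‖ ^ 2 * Real.exp (-(k : ℝ) * φ z)) * Real.exp (-ψ z) := by
    intro z
    rw [hgF z, mul_assoc, ← Real.exp_add, add_neg_cancel, Real.exp_zero, mul_one]
  have hFbound : ∀ z ∈ Metric.closedBall w ρ, ‖F z‖ ≤ SF := by
    intro z hz
    have h1 : ‖F z‖ ^ 2 ≤ Real.exp K * M := by
      rw [hFsq z]
      have h2 := hM z hz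
      have h3 : Real.exp (-ψ z) ≤ Real.exp K := by
        apply Real.exp_le_exp.2
        have := hψbound z hz
        exact le_trans (neg_le_abs _) this
      have h4 : (0:ℝ) ≤ ‖f z‖ ^ 2 * Real.exp (-(k : ℝ) * φ z) := by positivity
      calc (‖f z‖ ^ 2 * Real.exp (-(k : ℝ) * φ z)) * Real.exp (-ψ z)
          ≤ M * Real.exp K :=
            mul_le_mul h2 h3 (Real.exp_pos _).le hM0
        _ = Real.exp K * M := mul_comm _ _
    rw [hSFdef]
    have h0 : (0:ℝ) ≤ Real.exp K * M := by positivity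
    exact (Real.le_sqrt (norm_nonneg _) h0).2 h1
  -- F is holomorphic on W
  have hE : Differentiable ℂ (fun z : Fin n → ℂ =>
      Complex.exp (((-(k : ℝ) / 2 : ℝ) : ℂ) * (((φ w : ℝ) : ℂ) + ℓ (z - w)))) := by
    apply Differentiable.cexp
    apply Differentiable.const_mul
    exact (differentiable_const _).add (ℓ.differentiable.comp (differentiable_id.sub_const w))
  have hFd : DifferentiableOn ℂ F W := hf.mul hE.differentiableOn
  have hFat : DifferentiableAt ℂ F w := hFd.differentiableAt (hWo.mem_nhds hwW)
  set DFC : (Fin n → ℂ) →L[ℂ] ℂ := fderiv ℂ F w with hDFCdef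
  -- Cauchy bound on the derivative of F
  have hDF : ∀ v : Fin n → ℂ, ‖v‖ ≤ 1 → ‖DFC v‖ ≤ SF / ρ := by
    intro v hv
    set G : ℂ → ℂ := fun s => F (w + s • v) with hGdef
    have haff : Continuous (fun s : ℂ => w + s • v) :=
      continuous_const.add (continuous_id.smul continuous_const)
    have hmaps : ∀ s : ℂ, ‖s‖ ≤ ρ → w + s • v ∈ Metric.closedBall w ρ := by
      intro s hs
      rw [Metric.mem_closedBall, dist_pi_le_iff hρ0.le]
      intro j
      rw [dist_eq_norm]
      simp only [Pi.add_apply, Pi.smul_apply, add_sub_cancel_left, smul_eq_mul]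
      calc ‖s * v j‖ = ‖s‖ * ‖v j‖ := norm_mul _ _
        _ ≤ ρ * 1 := by
            have := norm_le_pi_norm v j
            exact mul_le_mul hs (le_trans this hv) (norm_nonneg _) hρ0.le
        _ = ρ := mul_one ρ
    have haffd : Differentiable ℂ (fun s : ℂ => w + s • v) :=
      (differentiable_id.smul_const v).const_add w
    have hGd : DifferentiableOn ℂ G ((fun s : ℂ => w + s • v) ⁻¹' W) :=
      hFd.comp haffd.differentiableOn (fun s hs => hs)
    have hsubG : Metric.closedBall (0:ℂ) ρ ⊆ (fun s : ℂ => w + s • v) ⁻¹' W := by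
      intro s hs
      rw [Metric.mem_closedBall, dist_zero_right] at hs
      exact hWsub (hmaps s hs)
    have hGB : ∀ s ∈ Metric.closedBall (0:ℂ) ρ, ‖G s‖ ≤ SF := by
      intro s hs
      rw [Metric.mem_closedBall, dist_zero_right] at hs
      exact hFbound _ (hmaps s hs)
    have hG0 : HasDerivAt G (DFC v) 0 := by
      have hγ : HasDerivAt (fun s : ℂ => w + s • v) v 0 := by
        have h1 : HasDerivAt (fun s : ℂ => s • v) ((1:ℂ) • v) 0 :=
          (hasDerivAt_id (0:ℂ)).smul_const v
        rw [one_smul] at h1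
        exact h1.const_add w
      have hFat' : HasFDerivAt F DFC (w + (0:ℂ) • v) := by
        rw [zero_smul, add_zero]; exact hFat.hasFDerivAt
      exact hFat'.comp_hasDerivAt 0 hγ
    have hcauchy : ‖deriv G 0‖ ≤ SF / ρ :=
      cauchyBound' (hWo.preimage haff) hρ0 hsubG hGd hGB
    rwa [hG0.deriv] at hcauchy
  have hDFnorm : ‖DFC‖ ≤ SF / ρ := by
    have hSF0 : 0 ≤ SF / ρ := div_nonneg (Real.sqrt_nonneg _) hρ0.le
    apply ContinuousLinearMap.opNorm_le_bound _ hSF0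
    intro v
    rcases eq_or_ne v 0 with rfl | hv
    · simp
    · have hnv : (0:ℝ) < ‖v‖ := norm_pos_iff.2 hv
      set u : Fin n → ℂ := ‖v‖⁻¹ • v with hu
      have hun : ‖u‖ ≤ 1 := by
        rw [hu, norm_smul, norm_inv, norm_norm, inv_mul_cancel₀ hnv.ne']
      have hvu : v = ‖v‖ • u := by
        rw [hu, smul_smul, mul_inv_cancel₀ hnv.ne', one_smul]
      calc ‖DFC v‖ = ‖DFC (‖v‖ • u)‖ := by rw [← hvu]
        _ = ‖v‖ * ‖DFC u‖ := by rw [DFC.map_smul_of_tower, norm_smul, norm_norm]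
        _ ≤ ‖v‖ * (SF / ρ) := mul_le_mul_of_nonneg_left (hDF u hun) hnv.le
        _ = SF / ρ * ‖v‖ := mul_comm _ _
  -- derivative of ψ at w is zero
  set Lre : (Fin n → ℂ) →L[ℝ] ℝ := Complex.reCLM.comp (ℓ.restrictScalars ℝ) with hLredef
  have hLre : Lre = Dφ := ContinuousLinearMap.ext fun v => hkey v
  have hφ' : HasFDerivAt φ Dφ w := hdiff w (Metric.mem_closedBall_self hr0.le)
  have hlin : HasFDerivAt (fun z : Fin n → ℂ => (ℓ (z - w)).re) Lre w := by
    have heq : (fun z : Fin n → ℂ => (ℓ (z - w)).re) = fun z => Lre z - Lre w := by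
      funext z
      simp [hLredef, map_sub]
    rw [heq]
    exact Lre.hasFDerivAt.sub_const (Lre w)
  have hψder : HasFDerivAt ψ (0 : (Fin n → ℂ) →L[ℝ] ℝ) w := by
    have h1 : HasFDerivAt (fun z : Fin n → ℂ => φ w + (ℓ (z - w)).re - φ z) (Lre - Dφ) w := by
      exact (hlin.const_add (φ w)).sub hφ'
    have h2 : HasFDerivAt ψ ((k : ℝ) • (Lre - Dφ)) w := h1.const_mul (k : ℝ)
    rwa [hLre, sub_self, smul_zero] at h2
  -- derivative of ‖F‖² at w
  set DFr : (Fin n → ℂ) →L[ℝ] ℂ := DFC.restrictScalars ℝ with hDFrdef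
  have hFr : HasFDerivAt F DFr w := hFat.hasFDerivAt.restrictScalars ℝ
  set J : ℂ →L[ℝ] ℂ := Complex.conjCLE.toContinuousLinearMap with hJdef
  have hJap : ∀ x : ℂ, J x = (starRingEnd ℂ) x := fun x => rfl
  have hJnorm : ∀ x : ℂ, ‖J x‖ = ‖x‖ := by
    intro x; rw [hJap]; exact RCLike.norm_conj x
  have hconj : HasFDerivAt (fun z : Fin n → ℂ => (starRingEnd ℂ) (F z)) (J.comp DFr) w := by
    have h := J.hasFDerivAt.comp w hFr
    have heq : (J ∘ F) = fun z : Fin n → ℂ => (starRingEnd ℂ) (F z) := by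
      funext z; exact hJap (F z)
    rwa [heq] at h
  have hmul : HasFDerivAt (fun z : Fin n → ℂ => F z * (starRingEnd ℂ) (F z))
      (F w • (J.comp DFr) + ((starRingEnd ℂ) (F w)) • DFr) w := hFr.mul hconj
  set Agrad : (Fin n → ℂ) →L[ℝ] ℝ :=
    Complex.reCLM.comp (F w • (J.comp DFr) + ((starRingEnd ℂ) (F w)) • DFr) with hAgdef
  have hA : HasFDerivAt (fun z : Fin n → ℂ => ‖F z‖ ^ 2) Agrad w := by
    have h := Complex.reCLM.hasFDerivAt.comp w hmul
    have heq : (Complex.reCLM ∘ fun z : Fin n → ℂ => F z * (starRingEnd ℂ) (F z))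
        = fun z : Fin n → ℂ => ‖F z‖ ^ 2 := by
      funext z
      simp only [Function.comp_apply, Complex.reCLM_apply, Complex.mul_conj,
        Complex.ofReal_re]
      rw [Complex.normSq_eq_norm_sq]
    rwa [heq] at h
  -- the derivative of g at w equals Agrad
  have hgeq : (fun z : Fin n → ℂ => ‖f z‖ ^ 2 * Real.exp (-(k : ℝ) * φ z))
      = fun z : Fin n → ℂ => ‖F z‖ ^ 2 * Real.exp (ψ z) := funext hgF
  have hexp : HasFDerivAt (fun z : Fin n → ℂ => Real.exp (ψ z))
      (Real.exp (ψ w) • (0 : (Fin n → ℂ) →L[ℝ] ℝ)) w := hψder.exp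
  have hgd : HasFDerivAt (fun z : Fin n → ℂ => ‖F z‖ ^ 2 * Real.exp (ψ z))
      ((‖F w‖ ^ 2) • (Real.exp (ψ w) • (0 : (Fin n → ℂ) →L[ℝ] ℝ))
        + Real.exp (ψ w) • Agrad) w := hA.mul hexp
  have hfderiv : fderiv ℝ (fun z : Fin n → ℂ => ‖f z‖ ^ 2 * Real.exp (-(k : ℝ) * φ z)) w
      = Agrad := by
    rw [hgeq, hgd.fderiv, hψw, Real.exp_zero, smul_zero, smul_zero, one_smul, zero_add]
  -- norm estimates
  have hDFrnorm : ‖DFr‖ = ‖DFC‖ := DFC.norm_restrictScalars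
  have hJcomp : ‖J.comp DFr‖ ≤ ‖DFr‖ := by
    apply ContinuousLinearMap.opNorm_le_bound _ (norm_nonneg _)
    intro v
    rw [ContinuousLinearMap.comp_apply, hJnorm]
    exact DFr.le_opNorm v
  have hAgnorm : ‖Agrad‖ ≤ 2 * ‖F w‖ * ‖DFC‖ := by
    calc ‖Agrad‖ ≤ ‖Complex.reCLM‖ * ‖F w • (J.comp DFr) + ((starRingEnd ℂ) (F w)) • DFr‖ :=
          ContinuousLinearMap.opNorm_comp_le _ _
      _ ≤ 1 * (‖F w • (J.comp DFr)‖ + ‖((starRingEnd ℂ) (F w)) • DFr‖) := by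
          apply mul_le_mul (le_of_eq Complex.reCLM_norm) (norm_add_le _ _) (norm_nonneg _)
          norm_num
      _ ≤ 2 * ‖F w‖ * ‖DFC‖ := by
          rw [one_mul]
          have hs1 : ‖F w • (J.comp DFr)‖ ≤ ‖F w‖ * ‖DFC‖ := by
            refine le_trans (ContinuousLinearMap.opNorm_smul_le _ _) ?_
            exact mul_le_mul_of_nonneg_left (le_trans hJcomp (le_of_eq hDFrnorm))
              (norm_nonneg _)
          have hs2 : ‖((starRingEnd ℂ) (F w)) • DFr‖ ≤ ‖F w‖ * ‖DFC‖ := by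
            refine le_trans (ContinuousLinearMap.opNorm_smul_le _ _) ?_
            rw [RCLike.norm_conj, hDFrnorm]
          linarith
  have hFw : ‖F w‖ ≤ Real.sqrt M := by
    have h1 : ‖F w‖ ^ 2 ≤ M := by
      rw [hFsq w, hψw, neg_zero, Real.exp_zero, mul_one]
      exact hM w hwP
    exact (Real.le_sqrt (norm_nonneg _) hM0).2 h1
  -- final arithmetic
  rw [hfderiv]
  have hsqM : Real.sqrt M * SF = Real.sqrt (Real.exp K) * M := by
    rw [hSFdef, ← Real.sqrt_mul hM0,
      show M * (Real.exp (K : ℝ) * M) = Real.exp (K : ℝ) * M ^ 2 by ring,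
      Real.sqrt_mul (Real.exp_pos _).le, Real.sqrt_sq hM0]
  have hstep : ‖Agrad‖ ≤ 2 * Real.sqrt M * (SF / ρ) := by
    calc ‖Agrad‖ ≤ 2 * ‖F w‖ * ‖DFC‖ := hAgnorm
      _ ≤ 2 * Real.sqrt M * (SF / ρ) := by
          apply mul_le_mul _ hDFnorm (norm_nonneg _) (by positivity)
          exact mul_le_mul_of_nonneg_left hFw (by norm_num)
  have hρinv : SF / ρ = SF * Real.sqrt k := by
    rw [hρdef]; field_simp
  have h2 : Real.sqrt (Real.exp K) ≤ Real.exp K := by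
    have he : (1:ℝ) ≤ Real.exp K := by
      have := Real.add_one_le_exp (K : ℝ)
      have := K.coe_nonneg
      linarith
    calc Real.sqrt (Real.exp (K:ℝ)) ≤ Real.sqrt ((Real.exp (K:ℝ)) ^ 2) :=
          Real.sqrt_le_sqrt (by nlinarith)
      _ = Real.exp (K:ℝ) := Real.sqrt_sq (by linarith)
  calc ‖Agrad‖ ≤ 2 * Real.sqrt M * (SF / ρ) := hstep
    _ = 2 * (Real.sqrt M * SF) * Real.sqrt k := by rw [hρinv]; ring
    _ = 2 * Real.sqrt (Real.exp K) * (Real.sqrt k * M) := by rw [hsqM]; ring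
    _ ≤ (2 * Real.exp K + 1) * (Real.sqrt k * M) := by
        apply mul_le_mul_of_nonneg_right _ (by positivity)
        linarith
    _ = (2 * Real.exp K + 1) * Real.sqrt k * M := by ring
end

section
/- Let (X, d) be a metric space with a Borel measure μ, let n ≥ 1 be an integer, k ≥ 1, 0 < δ < 1, K ≥ 1 and B ≥ 1. Let s_1, …, s_N : X → ℂ be square-integrable measurable functions forming an orthonormal family in L²(X, μ; ℂ), and let H be their pointwise linear span. Assume: (a) |s(z)|² ≤ K (δ/(2√k))^{−2n} ∫_{B(z, δ/(2√k))} |s|² dμ for every s ∈ H and z ∈ X; (b) Λ ⊆ X is a finite set with d(λ, λ') ≥ δ/√k for all distinct λ, λ' ∈ Λ; (c) ∫_X |s|² dμ ≤ B k^{−n} Σ_{λ∈Λ} |s(λ)|² for every s ∈ H. Set γ = 1 − δ^{2n}/(4^n K B) ∈ (0, 1). Then for every z ∈ X and r > 0, letting Ω = B(z, r/√k) and T_Ω : H → H be the concentration operator T_Ω s = P(1_Ω · s) (P the orthogonal projection of L²(μ) onto H), the number of eigenvalues of T_Ω, counted with multiplicity, that are strictly greater than γ is at most #(Λ ∩ B(z,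 (r+δ)/√k)). -/
open MeasureTheory

/-- Multiplication of an `L²` function by the indicator function of a measurable set `Ω`. -/
noncomputable def indicatorMulLp {X : Type*} [MeasurableSpace X] (μ : Measure X)
    (Ω : Set X) (hΩ : MeasurableSet Ω) (f : Lp ℂ 2 μ) : Lp ℂ 2 μ :=
  MeasureTheory.MemLp.toLp (Ω.indicator f) ((Lp.memLp f).indicator hΩ)

open scoped ENNReal

local notation "⟪" x ", " y "⟫" => @inner ℂ _ _ x y

lemma myCoeFnSum {α E : Type*} [MeasurableSpace α] {μ : Measure α} [NormedAddCommGroup E]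
    {p : ℝ≥0∞} {ι : Type*} (t : Finset ι) (F : ι → Lp E p μ) :
    (↑(∑ j ∈ t, F j) : α → E) =ᵐ[μ] fun x => ∑ j ∈ t, (F j : α → E) x := by
  classical
  induction t using Finset.induction_on with
  | empty => simp only [Finset.sum_empty]; exact Lp.coeFn_zero E p μ
  | insert a t' hj ih =>
    rw [Finset.sum_insert hj]
    filter_upwards [Lp.coeFn_add (F a) (∑ j ∈ t', F j), ih] with x h1 h2
    simp only [h1, Pi.add_apply, h2, Finset.sum_insert hj]

lemma mySqInt {α : Type*} [MeasurableSpace α] {μ : Measure α} {g : α → ℂ} (hg : MemLp g 2 μ) :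
    Integrable (fun x => ‖g x‖ ^ 2) μ := by
  have h := hg.integrable_norm_rpow two_ne_zero ENNReal.ofNat_ne_top
  simp only [ENNReal.toReal_ofNat] at h
  have he : (fun x => ‖g x‖ ^ (2 : ℕ)) = fun x => ‖g x‖ ^ (2 : ℝ) := by
    funext x; rw [← Real.rpow_natCast]; norm_num
  rw [he]; exact h

lemma eig_strict_bound {E : Type*} [NormedAddCommGroup E] [InnerProductSpace ℂ E]
    [FiniteDimensional ℂ E] (T : E →ₗ[ℂ] E) (hT : T.IsSymmetric) (γ : ℝ) {f : E}
    (hf : f ∈ ⨆ (c : ℝ) (_ : γ < c), Module.End.eigenspace (T : Module.End ℂ E) (c : ℂ))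
    (hf0 : f ≠ 0) :
    γ * ‖f‖ ^ 2 < (⟪f, T f⟫).re := by
  classical
  have hd' : Module.finrank ℂ E = Module.finrank ℂ E := rfl
  set d := Module.finrank ℂ E
  let b := hT.eigenvectorBasis hd'
  let ev := hT.eigenvalues hd'
  have hb : ∀ i, Module.End.HasEigenvector T ((ev i : ℝ) : ℂ) (b i) := fun i =>
    hT.hasEigenvector_eigenvectorBasis hd' i
  set c : Fin d → ℂ := fun i => ⟪b i, f⟫ with hc
  have hzero : ∀ i, ev i ≤ γ → c i = 0 := by
    intro i hi
    have hle : (⨆ (c : ℝ) (_ : γ < c), Module.End.eigenspace (T : Module.End ℂ E) (c : ℂ)) ≤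
        LinearMap.ker ((innerSL ℂ (b i)) : E →ₗ[ℂ] ℂ) := by
      refine iSup_le fun c' => iSup_le fun hc' => ?_
      intro g hg
      have hne : ((ev i : ℝ) : ℂ) ≠ ((c' : ℝ) : ℂ) := by
        simp only [ne_eq, Complex.ofReal_inj]
        intro h; rw [h] at hi; linarith
      have := hT.orthogonalFamily_eigenspaces hne ⟨b i, (hb i).1⟩ ⟨g, hg⟩
      simpa using this
    have := hle hf
    simpa [hc] using this
  have hrep : ∀ i, b.repr f i = c i := fun i => b.repr_apply_apply f i
  have hnorm : ‖f‖ ^ 2 = ∑ i, ‖c i‖ ^ 2 := by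
    have h1 : ‖b.repr f‖ = ‖f‖ := b.repr.norm_map f
    rw [← h1, EuclideanSpace.norm_eq, Real.sq_sqrt (by positivity)]
    exact Finset.sum_congr rfl fun i _ => by rw [hrep]
  have hTf : (⟪f, T f⟫).re = ∑ i, ev i * ‖c i‖ ^ 2 := by
    have key : ⟪f, T f⟫ = ∑ i, ((ev i * ‖c i‖ ^ 2 : ℝ) : ℂ) := by
      nth_rewrite 1 [← b.sum_repr' f]
      rw [sum_inner]
      refine Finset.sum_congr rfl fun i _ => ?_
      have hTe : T (b i) = ((ev i : ℝ) : ℂ) • b i :=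
        Module.End.mem_eigenspace_iff.mp (hb i).1
      rw [inner_smul_left, ← hT (b i) f, hTe, inner_smul_left, Complex.conj_ofReal, hc]
      simp only []
      calc (starRingEnd ℂ) (⟪b i, f⟫) * (((ev i : ℝ) : ℂ) * ⟪b i, f⟫)
          = ((ev i : ℝ) : ℂ) * ((starRingEnd ℂ) (⟪b i, f⟫) * ⟪b i, f⟫) := by ring
        _ = ((ev i : ℝ) : ℂ) * ((Complex.normSq (⟪b i, f⟫) : ℝ) : ℂ) := by
              rw [← Complex.normSq_eq_conj_mul_self]
        _ = ((ev i * ‖⟪b i, f⟫‖ ^ 2 : ℝ) : ℂ) := by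
              rw [Complex.normSq_eq_norm_sq]; push_cast; ring
    rw [key]
    rw [Complex.re_sum]
    exact Finset.sum_congr rfl fun i _ => by rw [Complex.ofReal_re]
  have hex : ∃ i, c i ≠ 0 := by
    by_contra h; push_neg at h
    apply hf0
    have h2 : ‖f‖ ^ 2 = 0 := by rw [hnorm]; simp [h]
    have h3 : ‖f‖ = 0 := by
      have := pow_eq_zero_iff (n := 2) (by norm_num) |>.mp h2
      exact this
    exact norm_eq_zero.mp h3
  obtain ⟨i₀, hi₀⟩ := hex
  have hpos : 0 < ∑ i, (ev i - γ) * ‖c i‖ ^ 2 := by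
    refine Finset.sum_pos' (fun i _ => ?_) ⟨i₀, Finset.mem_univ _, ?_⟩
    · rcases le_or_gt (ev i) γ with h | h
      · simp [hzero i h]
      · have h2 : (0:ℝ) ≤ ‖c i‖ ^ 2 := by positivity
        nlinarith
    · have h1 : γ < ev i₀ := by
        by_contra h; push_neg at h; exact hi₀ (hzero i₀ h)
      have h2 : 0 < ‖c i₀‖ ^ 2 := by
        have h3 : 0 < ‖c i₀‖ := norm_pos_iff.mpr hi₀
        positivity
      nlinarith
  have hsplit : ∑ i, (ev i - γ) * ‖c i‖ ^ 2
      = ∑ i, ev i * ‖c i‖ ^ 2 - ∑ i, γ * ‖c i‖ ^ 2 := by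
    rw [← Finset.sum_sub_distrib]
    exact Finset.sum_congr rfl fun i _ => by ring
  rw [hTf, hnorm, Finset.mul_sum]
  rw [hsplit] at hpos
  linarith

lemma conj_mul_self_eq (z : ℂ) : (starRingEnd ℂ) z * z = ((‖z‖ ^ 2 : ℝ) : ℂ) := by
  rw [← Complex.normSq_eq_conj_mul_self]
  simp [Complex.normSq_eq_norm_sq]

set_option maxHeartbeats 1000000

/-- Landau's eigenvalue bound for sampling sets: under the sub-mean value property (a),
separation (b) and the sampling inequality (c), with `γ = 1 − δ^{2n}/(4^n K B)`, the number of
eigenvalues (with multiplicity) of the concentration operator `T_Ω` of `Ω = B(z, r/√k)` that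
exceed `γ` is at most `#(Λ ∩ B(z, (r+δ)/√k))`. -/
theorem stmt_9 {X : Type*} [MetricSpace X] [MeasurableSpace X] [BorelSpace X]
    (μ : Measure X) (n : ℕ) (hn : 1 ≤ n) (k : ℝ) (hk : 1 ≤ k)
    (δ : ℝ) (hδ0 : 0 < δ) (hδ1 : δ < 1) (K B : ℝ) (hK : 1 ≤ K) (hB : 1 ≤ B)
    (N : ℕ) (s : Fin N → X → ℂ)
    (hmeas : ∀ j, Measurable (s j)) (hs2 : ∀ j, MemLp (s j) 2 μ)
    (hon : ∀ i j, ∫ x, s i x * (starRingEnd ℂ) (s j x) ∂μ = if i = j then 1 else 0)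
    (hsub : ∀ f ∈ Submodule.span ℂ (Set.range s), ∀ z : X,
      ‖f z‖ ^ 2 ≤ K * ((δ / (2 * Real.sqrt k)) ^ (2 * n))⁻¹ *
        ∫ y in Metric.ball z (δ / (2 * Real.sqrt k)), ‖f y‖ ^ 2 ∂μ)
    (Λ : Finset X)
    (hsep : ∀ a ∈ Λ, ∀ b ∈ Λ, a ≠ b → δ / Real.sqrt k ≤ dist a b)
    (hsamp : ∀ f ∈ Submodule.span ℂ (Set.range s),
      ∫ y, ‖f y‖ ^ 2 ∂μ ≤ B * (k ^ n)⁻¹ * ∑ a ∈ Λ, ‖f a‖ ^ 2)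
    (H : Submodule ℂ (Lp ℂ 2 μ)) [FiniteDimensional ℂ H] [CompleteSpace H]
    (hH : H = Submodule.span ℂ
      (Set.range fun j => MeasureTheory.MemLp.toLp (s j) (hs2 j))) :
    ∀ (z : X) (r : ℝ), 0 < r → ∀ T : H →ₗ[ℂ] H,
      (∀ f : H, T f = Submodule.orthogonalProjection H
          (indicatorMulLp μ (Metric.ball z (r / Real.sqrt k)) measurableSet_ball
            (f : Lp ℂ 2 μ))) →
      Module.finrank ℂ
          ↥(⨆ (c : ℝ) (_ : 1 - δ ^ (2 * n) / (4 ^ n * K * B) < c),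
              Module.End.eigenspace (T : Module.End ℂ H) (c : ℂ))
        ≤ Set.ncard ((↑Λ : Set X) ∩ Metric.ball z ((r + δ) / Real.sqrt k)) := by
  classical
  intro z r hr T hT
  have hk0 : (0:ℝ) < k := by linarith
  have hsk : 0 < Real.sqrt k := Real.sqrt_pos.mpr hk0
  have hsk_sq : Real.sqrt k ^ 2 = k := Real.sq_sqrt hk0.le
  set sk := Real.sqrt k with hsk_def
  set γ : ℝ := 1 - δ ^ (2 * n) / (4 ^ n * K * B) with hγ_def
  set ρ : ℝ := δ / (2 * sk) with hρ_def
  have hρ0 : 0 < ρ := by rw [hρ_def]; positivity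
  set Ω : Set X := Metric.ball z (r / sk) with hΩ_def
  set Λ' : Finset X := Λ.filter (fun a => a ∈ Metric.ball z ((r + δ) / sk)) with hΛ'_def
  have hRHS : Set.ncard ((↑Λ : Set X) ∩ Metric.ball z ((r + δ) / sk)) = Λ'.card := by
    rw [← Set.ncard_coe_finset]
    congr 1
    ext x
    simp [hΛ'_def, Finset.mem_filter, Set.mem_inter_iff, and_comm]
  rw [hRHS]
  -- the orthonormal family in L²
  set v : Fin N → Lp ℂ 2 μ := fun j => (hs2 j).toLp (s j) with hv_def
  have hon' : Orthonormal ℂ v := by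
    rw [orthonormal_iff_ite]
    intro i j
    have h1 : (inner ℂ (v i) (v j) : ℂ) = ∫ x, (starRingEnd ℂ) ((v i : X → ℂ) x) * (v j : X → ℂ) x ∂μ := by
      rw [MeasureTheory.L2.inner_def]
      exact integral_congr_ae (Filter.Eventually.of_forall fun x => by
        simp [RCLike.inner_apply, mul_comm])
    have h2 : ∫ x, (starRingEnd ℂ) ((v i : X → ℂ) x) * (v j : X → ℂ) x ∂μ
        = ∫ x, s j x * (starRingEnd ℂ) (s i x) ∂μ := by
      apply integral_congr_ae
      filter_upwards [(hs2 i).coeFn_toLp, (hs2 j).coeFn_toLp] with x hx1 hx2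
      simp only [hv_def]
      rw [hx1, hx2]
      ring
    rw [h1, h2, hon j i]
    by_cases h : i = j <;> simp [h, eq_comm]
  -- expansion of elements of H
  have hexp : ∀ f : H, ∃ c : Fin N → ℂ,
      (∀ j, (inner ℂ (v j) ((f : Lp ℂ 2 μ)) : ℂ) = c j) ∧
      ((f : Lp ℂ 2 μ) : X → ℂ) =ᵐ[μ] fun x => ∑ j, c j * s j x := by
    intro f
    have hfmem : (f : Lp ℂ 2 μ) ∈ Submodule.span ℂ (Set.range v) := by
      rw [← hH]; exact f.2
    rw [← Fintype.range_linearCombination (R := ℂ)] at hfmem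
    obtain ⟨c, hc⟩ := hfmem
    rw [Fintype.linearCombination_apply] at hc
    refine ⟨c, fun j => ?_, ?_⟩
    · rw [← hc]; exact hon'.inner_right_fintype c j
    · rw [← hc]
      refine (myCoeFnSum (Finset.univ) (fun j => c j • v j)).trans ?_
      have h2 : ∀ᵐ x ∂μ, ∀ j : Fin N, ((c j • v j : Lp ℂ 2 μ) : X → ℂ) x = c j * s j x := by
        rw [ae_all_iff]
        intro j
        filter_upwards [Lp.coeFn_smul (c j) (v j), (hs2 j).coeFn_toLp] with x hx1 hx2
        rw [hx1, Pi.smul_apply, smul_eq_mul]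
        simp only [hv_def]
        rw [hx2]
      filter_upwards [h2] with x hx
      exact Finset.sum_congr rfl fun j _ => hx j
  -- the pointwise representative
  set rep : H → X → ℂ := fun f x => ∑ j, (inner ℂ (v j) ((f : Lp ℂ 2 μ)) : ℂ) * s j x
    with hrep_def
  have hrep_ae : ∀ f : H, ((f : Lp ℂ 2 μ) : X → ℂ) =ᵐ[μ] rep f := by
    intro f
    obtain ⟨c, hcoef, hae⟩ := hexp f
    refine hae.trans (Filter.Eventually.of_forall fun x => ?_)
    rw [hrep_def]
    exact Finset.sum_congr rfl fun j _ => by rw [hcoef j]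
  have hrep_mem : ∀ f : H, rep f ∈ Submodule.span ℂ (Set.range s) := by
    intro f
    have he : rep f = ∑ j, (inner ℂ (v j) ((f : Lp ℂ 2 μ)) : ℂ) • s j := by
      funext x
      rw [hrep_def]
      simp [Finset.sum_apply]
    rw [he]
    exact Submodule.sum_mem _ fun j _ =>
      Submodule.smul_mem _ _ (Submodule.subset_span ⟨j, rfl⟩)
  have hrep_l2 : ∀ f : H, MemLp (rep f) 2 μ := by
    intro f
    have h := memLp_finset_sum' (μ := μ) (p := 2) Finset.univ
      (f := fun j x => (inner ℂ (v j) ((f : Lp ℂ 2 μ)) : ℂ) * s j x)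
      (fun j _ => (hs2 j).const_mul _)
    have he : rep f = ∑ j : Fin N, fun x => (inner ℂ (v j) ((f : Lp ℂ 2 μ)) : ℂ) * s j x := by
      funext x; rw [hrep_def]; simp [Finset.sum_apply]
    rw [he]; exact h
  -- symmetry of T
  have hkey : ∀ u w : Lp ℂ 2 μ, (inner ℂ (indicatorMulLp μ Ω measurableSet_ball u) w : ℂ)
      = inner ℂ u (indicatorMulLp μ Ω measurableSet_ball w) := by
    intro u w
    rw [MeasureTheory.L2.inner_def, MeasureTheory.L2.inner_def]
    apply integral_congr_ae
    have hΩm : MeasurableSet Ω := measurableSet_ball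
    have hm1 := (Lp.memLp u).indicator hΩm
    have hm2 := (Lp.memLp w).indicator hΩm
    filter_upwards [MemLp.coeFn_toLp hm1, MemLp.coeFn_toLp hm2] with x h1 h2
    have e1 : (indicatorMulLp μ Ω measurableSet_ball u : X → ℂ) x = Ω.indicator (⇑u) x := h1
    have e2 : (indicatorMulLp μ Ω measurableSet_ball w : X → ℂ) x = Ω.indicator (⇑w) x := h2
    rw [RCLike.inner_apply', RCLike.inner_apply', e1, e2]
    by_cases hx : x ∈ Ω <;>
      simp [Set.indicator_of_mem, Set.indicator_of_notMem, hx]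
  have hTsym : T.IsSymmetric := by
    intro x y
    rw [hT x, hT y, Submodule.inner_orthogonalProjection_eq_of_mem_right,
      Submodule.inner_orthogonalProjection_eq_of_mem_left]
    exact hkey _ _
  -- quadratic form identities
  have hI : ∀ f : H, ‖(f : Lp ℂ 2 μ)‖ ^ 2 = ∫ x, ‖rep f x‖ ^ 2 ∂μ := by
    intro f
    have h1 : (inner ℂ ((f : Lp ℂ 2 μ)) ((f : Lp ℂ 2 μ)) : ℂ)
        = ((∫ x, ‖rep f x‖ ^ 2 ∂μ : ℝ) : ℂ) := by
      have ha : (inner ℂ ((f : Lp ℂ 2 μ)) ((f : Lp ℂ 2 μ)) : ℂ)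
          = ∫ x, ((‖rep f x‖ ^ 2 : ℝ) : ℂ) ∂μ := by
        rw [MeasureTheory.L2.inner_def]
        apply integral_congr_ae
        filter_upwards [hrep_ae f] with x hx
        rw [RCLike.inner_apply', hx, conj_mul_self_eq]
      rw [ha]
      exact integral_ofReal
    have h2 := inner_self_eq_norm_sq (𝕜 := ℂ) ((f : Lp ℂ 2 μ))
    rw [h1] at h2
    rw [← h2]
    simp
  have hJ : ∀ f : H, (inner ℂ f (T f) : ℂ).re = ∫ x in Ω, ‖rep f x‖ ^ 2 ∂μ := by
    intro f
    rw [hT f, Submodule.inner_orthogonalProjection_eq_of_mem_left]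
    have h1 : (inner ℂ ((f : Lp ℂ 2 μ))
          (indicatorMulLp μ Ω measurableSet_ball ((f : Lp ℂ 2 μ))) : ℂ)
        = ((∫ x in Ω, ‖rep f x‖ ^ 2 ∂μ : ℝ) : ℂ) := by
      rw [MeasureTheory.L2.inner_def]
      have h2 : ∫ x, (inner ℂ (((f : Lp ℂ 2 μ) : X → ℂ) x)
            ((indicatorMulLp μ Ω measurableSet_ball ((f : Lp ℂ 2 μ)) : X → ℂ) x) : ℂ) ∂μ
          = ∫ x, Ω.indicator (fun y => ((‖rep f y‖ ^ 2 : ℝ) : ℂ)) x ∂μ := by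
        apply integral_congr_ae
        have hΩm : MeasurableSet Ω := measurableSet_ball
        have hm1 := (Lp.memLp ((f : Lp ℂ 2 μ))).indicator hΩm
        filter_upwards [hrep_ae f, MemLp.coeFn_toLp hm1] with x hx hind
        rw [RCLike.inner_apply']
        have e1 : (indicatorMulLp μ Ω measurableSet_ball ((f : Lp ℂ 2 μ)) : X → ℂ) x
            = Ω.indicator (⇑((f : Lp ℂ 2 μ))) x := hind
        rw [e1]
        by_cases hxΩ : x ∈ Ω
        · rw [Set.indicator_of_mem hxΩ, Set.indicator_of_mem hxΩ, hx, conj_mul_self_eq]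
        · rw [Set.indicator_of_notMem hxΩ, Set.indicator_of_notMem hxΩ, mul_zero]
      rw [h2, integral_indicator (measurableSet_ball : MeasurableSet Ω)]
      exact integral_ofReal
    rw [h1]
    simp
  -- the evaluation map
  set Φ : H →ₗ[ℂ] ({ x // x ∈ Λ' } → ℂ) :=
    { toFun := fun f => fun a => rep f (a : X),
      map_add' := by
        intro f g; funext a
        simp only [hrep_def, Submodule.coe_add, inner_add_right, add_mul,
          Finset.sum_add_distrib, Pi.add_apply]
      map_smul' := by
        intro m f; funext a
        simp only [hrep_def, Submodule.coe_smul, inner_smul_right, RingHom.id_apply,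
          Finset.mul_sum, Pi.smul_apply, smul_eq_mul, mul_assoc] } with hΦ_def
  set E := ⨆ (c : ℝ) (_ : γ < c), Module.End.eigenspace (T : Module.End ℂ ↥H) (c : ℂ)
    with hE_def
  have hinj : Function.Injective (Φ.comp E.subtype) := by
    rw [← LinearMap.ker_eq_bot, Submodule.eq_bot_iff]
    intro f hfker
    by_contra hf0
    set F : H := E.subtype f with hF_def
    have hF0 : F ≠ 0 := by
      rw [hF_def]
      simpa [Submodule.coe_eq_zero] using hf0
    set g : X → ℂ := rep F with hg_def
    have hg_mem : g ∈ Submodule.span ℂ (Set.range s) := hrep_mem F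
    have hg_l2 : MemLp g 2 μ := hrep_l2 F
    have hint : Integrable (fun x => ‖g x‖ ^ 2) μ := mySqInt hg_l2
    set I : ℝ := ∫ x, ‖g x‖ ^ 2 ∂μ with hI_def
    set J : ℝ := ∫ x in Ω, ‖g x‖ ^ 2 ∂μ with hJ_def
    have hK0 : (0:ℝ) < K := by linarith
    have hB0 : (0:ℝ) < B := by linarith
    -- spectral lower bound
    have hγI : γ * I < J := by
      have hmemb : F ∈ ⨆ (c : ℝ) (_ : γ < c),
          Module.End.eigenspace (T : Module.End ℂ ↥H) (c : ℂ) := by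
        have hle : E ≤ ⨆ (c : ℝ) (_ : γ < c),
            Module.End.eigenspace (T : Module.End ℂ ↥H) (c : ℂ) := le_of_eq hE_def
        exact hle f.2
      have h1 := eig_strict_bound T hTsym γ hmemb hF0
      have hIF := hI F
      rw [← hg_def, ← hI_def] at hIF
      have hJF := hJ F
      rw [← hg_def, ← hJ_def] at hJF
      have hnF : ‖F‖ = ‖(F : Lp ℂ 2 μ)‖ := rfl
      rw [hnF, hIF, hJF] at h1
      exact h1
    -- vanishing on Λ'
    have hvan : ∀ a, a ∈ Λ' → g a = 0 := by
      intro a ha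
      have h := congrFun hfker ⟨a, ha⟩
      simpa [hΦ_def, hg_def, hF_def] using h
    -- sampling inequality
    have hsampg : I ≤ B * (k ^ n)⁻¹ * ∑ a ∈ Λ, ‖g a‖ ^ 2 := by
      have h := hsamp g hg_mem
      rwa [← hI_def] at h
    -- restrict the sum to points far from z
    set Λ'' : Finset X := Λ.filter (fun a => ¬ (a ∈ Metric.ball z ((r + δ) / sk)))
      with hΛ''_def
    have hsplit : ∑ a ∈ Λ, ‖g a‖ ^ 2 = ∑ a ∈ Λ'', ‖g a‖ ^ 2 := by
      refine (Finset.sum_subset (Finset.filter_subset _ _) ?_).symm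
      intro a haΛ ha''
      have haball : a ∈ Metric.ball z ((r + δ) / sk) := by
        by_contra hc
        exact ha'' (Finset.mem_filter.mpr ⟨haΛ, hc⟩)
      have haΛ' : a ∈ Λ' := Finset.mem_filter.mpr ⟨haΛ, haball⟩
      rw [hvan a haΛ']
      simp
    -- pointwise sub-mean bound
    have hsum1 : ∑ a ∈ Λ'', ‖g a‖ ^ 2
        ≤ K * (ρ ^ (2 * n))⁻¹ * ∑ a ∈ Λ'', ∫ y in Metric.ball a ρ, ‖g y‖ ^ 2 ∂μ := by
      rw [Finset.mul_sum]
      exact Finset.sum_le_sum fun a _ => hsub g hg_mem a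
    -- disjointness of the balls
    have hdisj : (Λ'' : Set X).Pairwise (Function.onFun Disjoint fun a => Metric.ball a ρ) := by
      intro a ha b hb hab
      have haΛ : a ∈ Λ := Finset.mem_of_mem_filter a (by exact_mod_cast ha)
      have hbΛ : b ∈ Λ := Finset.mem_of_mem_filter b (by exact_mod_cast hb)
      have hd : δ / sk ≤ dist a b := hsep a haΛ b hbΛ hab
      have hρρ : ρ + ρ = δ / sk := by
        rw [hρ_def]
        field_simp
        ring
      exact Metric.ball_disjoint_ball (by linarith)
    -- the balls avoid Ω
    have hsubΩ : ∀ a ∈ Λ'', Metric.ball a ρ ⊆ Ωᶜ := by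
      intro a ha x hx
      have haz : ¬ (a ∈ Metric.ball z ((r + δ) / sk)) := (Finset.mem_filter.mp ha).2
      rw [Metric.mem_ball, not_lt] at haz
      have hxa : dist x a < ρ := Metric.mem_ball.mp hx
      simp only [Set.mem_compl_iff, hΩ_def, Metric.mem_ball, not_lt]
      have htri : dist a z ≤ dist a x + dist x z := dist_triangle a x z
      have h5 : r / sk + ρ ≤ (r + δ) / sk := by
        rw [hρ_def, div_add_div _ _ (ne_of_gt hsk) (by positivity),
          div_le_div_iff₀ (by positivity) hsk]
        ring_nf
        nlinarith [hsk, hδ0, hsk_sq]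
      have hax : dist a x < ρ := by rwa [dist_comm]
      linarith
    -- summing the integrals over disjoint balls
    have hsum2 : ∑ a ∈ Λ'', ∫ y in Metric.ball a ρ, ‖g y‖ ^ 2 ∂μ
        ≤ ∫ y in Ωᶜ, ‖g y‖ ^ 2 ∂μ := by
      rw [← MeasureTheory.integral_biUnion_finset Λ'' (fun a _ => measurableSet_ball) hdisj
        (fun a _ => hint.integrableOn)]
      apply MeasureTheory.setIntegral_mono_set hint.integrableOn
      · exact Filter.Eventually.of_forall fun x => by positivity
      · exact HasSubset.Subset.eventuallyLE (Set.iUnion₂_subset hsubΩ)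
    have hcompl : ∫ y in Ωᶜ, ‖g y‖ ^ 2 ∂μ = I - J := by
      have h := MeasureTheory.integral_add_compl (measurableSet_ball : MeasurableSet Ω) hint
      rw [hI_def, hJ_def]
      linarith
    -- constants
    have hsk2n : sk ^ (2 * n) = k ^ n := by rw [pow_mul, hsk_sq]
    have h2n : (2:ℝ) ^ (2 * n) = 4 ^ n := by rw [pow_mul]; norm_num
    have hρ2n : ρ ^ (2 * n) = δ ^ (2 * n) / (4 ^ n * k ^ n) := by
      rw [hρ_def, div_pow, mul_pow, h2n, hsk2n]
    set C : ℝ := B * (k ^ n)⁻¹ * (K * (ρ ^ (2 * n))⁻¹) with hC_def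
    have hC0 : 0 < C := by
      rw [hC_def]
      exact mul_pos (mul_pos hB0 (inv_pos.mpr (pow_pos hk0 n)))
        (mul_pos hK0 (inv_pos.mpr (pow_pos hρ0 (2 * n))))
    have h1γ : 1 - γ = δ ^ (2 * n) / (4 ^ n * K * B) := by rw [hγ_def]; ring
    have hCγ : C * (1 - γ) = 1 := by
      rw [h1γ, hC_def, hρ2n]
      have h4 : ((4:ℝ) ^ n) ≠ 0 := by positivity
      have hkn : (k ^ n) ≠ 0 := by positivity
      have hδn : (δ ^ (2 * n)) ≠ 0 := by positivity
      field_simp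
    -- final chain
    have hBk : (0:ℝ) ≤ B * (k ^ n)⁻¹ :=
      mul_nonneg hB0.le (inv_nonneg.mpr (pow_nonneg hk0.le n))
    have hKρ : (0:ℝ) ≤ K * (ρ ^ (2 * n))⁻¹ :=
      mul_nonneg hK0.le (inv_nonneg.mpr (pow_nonneg hρ0.le (2 * n)))
    have hchain : I ≤ C * (I - J) := by
      calc I ≤ B * (k ^ n)⁻¹ * ∑ a ∈ Λ, ‖g a‖ ^ 2 := hsampg
        _ = B * (k ^ n)⁻¹ * ∑ a ∈ Λ'', ‖g a‖ ^ 2 := by rw [hsplit]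
        _ ≤ B * (k ^ n)⁻¹ * (K * (ρ ^ (2 * n))⁻¹
              * ∑ a ∈ Λ'', ∫ y in Metric.ball a ρ, ‖g y‖ ^ 2 ∂μ) :=
            mul_le_mul_of_nonneg_left hsum1 hBk
        _ ≤ B * (k ^ n)⁻¹ * (K * (ρ ^ (2 * n))⁻¹ * (I - J)) := by
            refine mul_le_mul_of_nonneg_left ?_ hBk
            refine mul_le_mul_of_nonneg_left ?_ hKρ
            rw [← hcompl]
            exact hsum2
        _ = C * (I - J) := by rw [hC_def]; ring
    have h7 : C * γ * I < C * J := by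
      have h := mul_lt_mul_of_pos_left hγI hC0
      calc C * γ * I = C * (γ * I) := by ring
        _ < C * J := h
    have h9 : C - C * γ = 1 := by rw [← hCγ]; ring
    have h10 : C * I - C * γ * I = I := by
      calc C * I - C * γ * I = (C - C * γ) * I := by ring
        _ = 1 * I := by rw [h9]
        _ = I := one_mul I
    have h11 : C * (I - J) = C * I - C * J := by ring
    linarith
  calc Module.finrank ℂ ↥E ≤ Module.finrank ℂ ({ x // x ∈ Λ' } → ℂ) :=
        LinearMap.finrank_le_finrank_of_injective hinj
    _ = Λ'.card := by rw [Module.finrank_fintype_fun_eq_card, Fintype.card_coe]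
end

section
/- Let (X, d) be a metric space with a Borel measure μ, let n ≥ 1 be an integer, and suppose there is C₁ > 0 such that μ(B(x, ρ)) ≤ C₁ ρ^{2n} for all x ∈ X, ρ > 0, and μ(B(x, ρ+t) ∖ B(x, ρ)) ≤ C₁ ρ^{2n−1} t for all x ∈ X and 0 < t ≤ ρ. Let α > n + 1/2, C₂ > 0, and let φ : [0, ∞) → [0, ∞) be nonincreasing and continuously differentiable with φ(u) ≤ C₂ (1+u)^{−α} for all u ≥ 0. Let k ≥ 1 and let K : X × X → ℂ be measurable with |K(x, y)| ≤ k^n φ(√k · d(x, y)) for all x, y ∈ X. Then there is a constant A, depending only on n, C₁, C₂ and α, such that for every z ∈ X and r > 0, with Ω = B(z, r/√k): ∬_{Ω×Ω^c} |K(x, y)|² dμ(x) dμ(y) ≤ A r^{2n−1}. -/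
open MeasureTheory

namespace Stmt13Aux

/-- Bochner integral of a nonnegative function is at most the toReal of the lintegral. -/
lemma int_le_lint {X : Type*} [MeasurableSpace X] (μ : Measure X) (f : X → ℝ)
    (hf : ∀ x, 0 ≤ f x) :
    ∫ x, f x ∂μ ≤ (∫⁻ x, ENNReal.ofReal (f x) ∂μ).toReal := by
  by_cases h : Integrable f μ
  · rw [integral_eq_lintegral_of_nonneg_ae (Filter.Eventually.of_forall hf)
      h.aestronglyMeasurable]
  · rw [integral_undef h]; exact ENNReal.toReal_nonneg

lemma dyadic_exists {c : ℝ} (hc : 1 ≤ c) : ∃ j : ℕ, (2:ℝ)^j ≤ c ∧ c < 2^(j+1) := by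
  obtain ⟨m, hm⟩ := pow_unbounded_of_one_lt c (one_lt_two (α := ℝ))
  have hP : ∃ m : ℕ, c < 2^(m+1) :=
    ⟨m, lt_of_lt_of_le hm (pow_le_pow_right₀ one_le_two (Nat.le_succ m))⟩
  classical
  refine ⟨Nat.find hP, ?_, Nat.find_spec hP⟩
  rcases Nat.eq_zero_or_pos (Nat.find hP) with h0 | h1
  · rw [h0]; simpa using hc
  · have hmin := Nat.find_min hP (m := Nat.find hP - 1) (by omega)
    push_neg at hmin
    have hje : Nat.find hP - 1 + 1 = Nat.find hP := by omega
    rwa [hje] at hmin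

lemma pow_rpow_comm {x : ℝ} (hx : 0 ≤ x) (c : ℝ) (j : ℕ) : ((x^j : ℝ))^c = (x^c)^j := by
  rw [← Real.rpow_natCast x j, ← Real.rpow_mul hx, mul_comm, Real.rpow_mul hx,
    Real.rpow_natCast]

lemma inv_one_sub_rpow_pos {x : ℝ} (hx : 0 < x) : 0 < (1 - (2:ℝ)^(-x))⁻¹ := by
  have h := Real.rpow_lt_one_of_one_lt_of_neg (one_lt_two (α := ℝ)) (by linarith : -x < 0)
  exact inv_pos.2 (by linarith)

/-- The key dyadic series estimate. -/
lemma dyadic_sum {a b s : ℝ} (ha : 0 < a) (hb : 0 < b) (hs : 0 < s) :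
    Summable (fun j : ℕ => min (((2:ℝ)^j * s)^a) (((2:ℝ)^j * s)^(-b)))
    ∧ ∑' j : ℕ, min (((2:ℝ)^j * s)^a) (((2:ℝ)^j * s)^(-b))
      ≤ ((1 - 2^(-a))⁻¹ + (1 - 2^(-b))⁻¹) * min 1 (s^(-b)) := by
  set qa : ℝ := (2:ℝ)^(-a) with hqa
  set qb : ℝ := (2:ℝ)^(-b) with hqb
  have hqa0 : 0 < qa := Real.rpow_pos_of_pos two_pos _
  have hqb0 : 0 < qb := Real.rpow_pos_of_pos two_pos _
  have hqa1 : qa < 1 := Real.rpow_lt_one_of_one_lt_of_neg one_lt_two (by linarith)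
  have hqb1 : qb < 1 := Real.rpow_lt_one_of_one_lt_of_neg one_lt_two (by linarith)
  have hCa : 0 < (1 - qa)⁻¹ := inv_pos.2 (by linarith)
  have hCb : 0 < (1 - qb)⁻¹ := inv_pos.2 (by linarith)
  set f : ℕ → ℝ := fun j => min (((2:ℝ)^j * s)^a) (((2:ℝ)^j * s)^(-b)) with hf
  have hv0 : ∀ j : ℕ, (0:ℝ) < (2:ℝ)^j * s := fun j => by positivity
  have hinv2 : ∀ m : ℕ, (((2:ℝ)^m)⁻¹) = ((2:ℝ)⁻¹)^m := fun m => by rw [inv_pow]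
  have hqam : ∀ m : ℕ, (((2:ℝ)^m)⁻¹)^a = qa^m := by
    intro m
    rw [hinv2, pow_rpow_comm (by norm_num) a m, Real.inv_rpow (by norm_num),
      ← Real.rpow_neg (by norm_num)]
  have hqbm : ∀ m : ℕ, (((2:ℝ)^m : ℝ))^(-b) = qb^m := by
    intro m
    rw [pow_rpow_comm (by norm_num : (0:ℝ) ≤ 2) (-b) m]
  have hfle : ∀ j : ℕ, f j ≤ s^(-b) * qb^j := by
    intro j
    refine (min_le_right _ _).trans (le_of_eq ?_)
    rw [Real.mul_rpow (by positivity) hs.le, hqbm j, mul_comm]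
  have hg : Summable (fun j : ℕ => s^(-b) * qb^j) :=
    (summable_geometric_of_lt_one hqb0.le hqb1).mul_left _
  have hf0 : ∀ j : ℕ, 0 ≤ f j := fun j => le_min (by positivity) (by positivity)
  have hsum : Summable f := Summable.of_nonneg_of_le hf0 hfle hg
  refine ⟨hsum, ?_⟩
  rcases le_or_gt 1 s with hs1 | hs1
  · -- s ≥ 1 : use only the tail bound
    have hmin : min 1 (s^(-b)) = s^(-b) :=
      min_eq_right (Real.rpow_le_one_of_one_le_of_nonpos hs1 (by linarith))
    have hsb : 0 ≤ s^(-b) := by positivity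
    calc ∑' j, f j ≤ ∑' j : ℕ, s^(-b) * qb^j := Summable.tsum_le_tsum hfle hsum hg
      _ = s^(-b) * (1 - qb)⁻¹ := by
          rw [tsum_mul_left, tsum_geometric_of_lt_one hqb0.le hqb1]
      _ ≤ ((1 - qa)⁻¹ + (1 - qb)⁻¹) * min 1 (s^(-b)) := by
          rw [hmin]; nlinarith
  · -- s < 1 : split the sum at the dyadic scale where 2^J s reaches 1
    have hex : ∃ m : ℕ, 1 ≤ (2:ℝ)^m * s := by
      obtain ⟨m, hm⟩ := pow_unbounded_of_one_lt s⁻¹ (one_lt_two (α := ℝ))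
      exact ⟨m, by rw [← inv_mul_cancel₀ (ne_of_gt hs)]; nlinarith [inv_pos.2 hs]⟩
    classical
    set J := Nat.find hex with hJdef
    have hJ : 1 ≤ (2:ℝ)^J * s := Nat.find_spec hex
    have hJ0 : J ≠ 0 := by
      intro h
      rw [h] at hJ; simp at hJ; linarith
    have hJpred : (2:ℝ)^(J-1) * s < 1 := by
      have := Nat.find_min hex (m := J - 1) (by omega)
      push_neg at this; exact this
    have hhead : ∀ j ∈ Finset.range J, f j ≤ qa^(J-1-j) := by
      intro j hj
      rw [Finset.mem_range] at hj
      have hje : j + (J - 1 - j) = J - 1 := by omega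
      have h2 : (2:ℝ)^j * (2:ℝ)^(J-1-j) = 2^(J-1) := by rw [← pow_add, hje]
      have h3 : (2:ℝ)^j * s * (2:ℝ)^(J-1-j) ≤ 1 := by nlinarith [hv0 j]
      have h4 : (2:ℝ)^j * s ≤ ((2:ℝ)^(J-1-j))⁻¹ := by
        rw [← one_div]
        exact (le_div_iff₀ (by positivity)).2 h3
      calc f j ≤ ((2:ℝ)^j * s)^a := min_le_left _ _
        _ ≤ (((2:ℝ)^(J-1-j))⁻¹)^a := Real.rpow_le_rpow (hv0 j).le h4 ha.le
        _ = qa^(J-1-j) := hqam _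
    have htail : ∀ i : ℕ, f (i + J) ≤ qb^i := by
      intro i
      have h1 : ((2:ℝ)^i : ℝ) ≤ (2:ℝ)^(i+J) * s := by
        rw [pow_add]
        nlinarith [pow_pos (two_pos (α := ℝ)) i]
      calc f (i + J) ≤ ((2:ℝ)^(i+J) * s)^(-b) := min_le_right _ _
        _ ≤ (((2:ℝ)^i : ℝ))^(-b) :=
            Real.rpow_le_rpow_of_nonpos (by positivity) h1 (by linarith)
        _ = qb^i := hqbm i
    have hheadsum : ∑ j ∈ Finset.range J, f j ≤ (1 - qa)⁻¹ := by
      calc ∑ j ∈ Finset.range J, f j ≤ ∑ j ∈ Finset.range J, qa^(J-1-j) :=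
            Finset.sum_le_sum hhead
        _ = ∑ j ∈ Finset.range J, qa^j := Finset.sum_range_reflect (fun i => qa^i) J
        _ ≤ ∑' j : ℕ, qa^j := Summable.sum_le_tsum _ (fun _ _ => by positivity)
            (summable_geometric_of_lt_one hqa0.le hqa1)
        _ = (1 - qa)⁻¹ := tsum_geometric_of_lt_one hqa0.le hqa1
    have htailsum : ∑' i : ℕ, f (i + J) ≤ (1 - qb)⁻¹ := by
      calc ∑' i : ℕ, f (i + J) ≤ ∑' i : ℕ, qb^i :=
            Summable.tsum_le_tsum htail ((summable_nat_add_iff J).2 hsum)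
              (summable_geometric_of_lt_one hqb0.le hqb1)
        _ = (1 - qb)⁻¹ := tsum_geometric_of_lt_one hqb0.le hqb1
    have hmin : min 1 (s^(-b)) = 1 :=
      min_eq_left (Real.one_le_rpow_of_pos_of_le_one_of_nonpos hs hs1.le (by linarith))
    rw [hmin, mul_one, ← Summable.sum_add_tsum_nat_add J hsum]
    linarith

end Stmt13Aux

open Stmt13Aux

set_option maxHeartbeats 1000000 in
/-- Inner integral estimate. -/
lemma stmt13_inner {X : Type} [MetricSpace X] [MeasurableSpace X] [BorelSpace X]
    (μ : Measure X) {n : ℕ} (hn : 1 ≤ n) {C₁ α : ℝ} (hC₁ : 0 < C₁)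
    (hβ : 1 < 2*α - 2*(n:ℝ))
    (hvol : ∀ (x : X) (ρ : ℝ), 0 < ρ → μ (Metric.ball x ρ) ≤ ENNReal.ofReal (C₁ * ρ ^ (2*n)))
    {k : ℝ} (hk : 1 ≤ k) (x : X) {δ : ℝ} (hδ : 0 < δ) :
    ∫⁻ y in (Metric.ball x δ)ᶜ,
        ENNReal.ofReal ((1 + Real.sqrt k * dist x y) ^ (-(2*α))) ∂μ
      ≤ ENNReal.ofReal (C₁ * 4^n * ((k:ℝ)^n)⁻¹ *
          (((1 - 2^(-(2*(n:ℝ))))⁻¹ + (1 - 2^(-(2*α-2*(n:ℝ))))⁻¹)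
            * min 1 ((Real.sqrt k * δ)^(-(2*α - 2*(n:ℝ)))))) := by
  have hk0 : (0:ℝ) < k := by linarith
  have hsk0 : 0 < Real.sqrt k := Real.sqrt_pos.2 hk0
  have hα0 : 0 < α := by
    have : (1:ℝ) ≤ (n:ℝ) := by exact_mod_cast hn
    linarith
  set β : ℝ := 2*α - 2*(n:ℝ) with hβdef
  set s : ℝ := Real.sqrt k * δ with hsdef
  have hs : 0 < s := by positivity
  have hknz : ((k:ℝ)^n) ≠ 0 := by positivity
  set A : ℕ → Set X := fun j =>
    Metric.ball x ((2:ℝ)^(j+1)*δ) \ Metric.ball x ((2:ℝ)^j*δ) with hA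
  have cover : (Metric.ball x δ)ᶜ ⊆ ⋃ j, A j := by
    intro y hy
    have hd : δ ≤ dist y x := by
      by_contra h
      exact hy (Metric.mem_ball.2 (by linarith))
    have hc : 1 ≤ dist y x / δ := (one_le_div hδ).2 hd
    obtain ⟨j, h1, h2⟩ := dyadic_exists hc
    rw [le_div_iff₀ hδ] at h1
    rw [div_lt_iff₀ hδ] at h2
    exact Set.mem_iUnion.2 ⟨j, Metric.mem_ball.2 h2, fun h => absurd (Metric.mem_ball.1 h)
      (not_lt.2 h1)⟩
  have hsq : Real.sqrt k ^ (2*n) = k^n := by rw [pow_mul, Real.sq_sqrt hk0.le]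
  -- per-annulus bound
  have termbound : ∀ j : ℕ,
      ∫⁻ y in A j, ENNReal.ofReal ((1 + Real.sqrt k * dist x y) ^ (-(2*α))) ∂μ
        ≤ ENNReal.ofReal (C₁ * 4^n * ((k:ℝ)^n)⁻¹ *
            min (((2:ℝ)^j * s)^(2*(n:ℝ))) (((2:ℝ)^j * s)^(-β))) := by
    intro j
    set v : ℝ := (2:ℝ)^j * s with hv
    have hv0 : 0 < v := by positivity
    have hAmeas : MeasurableSet (A j) :=
      measurableSet_ball.diff measurableSet_ball
    have step1 : ∫⁻ y in A j, ENNReal.ofReal ((1 + Real.sqrt k * dist x y) ^ (-(2*α))) ∂μ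
        ≤ ENNReal.ofReal ((1 + v) ^ (-(2*α))) * μ (A j) := by
      rw [← setLIntegral_const (A j) (ENNReal.ofReal ((1 + v) ^ (-(2*α))))]
      refine setLIntegral_mono' hAmeas (fun y hy => ?_)
      have hy2 : ¬ (dist y x < (2:ℝ)^j*δ) := fun h => hy.2 (Metric.mem_ball.2 h)
      push_neg at hy2
      have hvd : v ≤ Real.sqrt k * dist x y := by
        rw [dist_comm]
        calc v = Real.sqrt k * ((2:ℝ)^j * δ) := by rw [hv, hsdef]; ring
          _ ≤ Real.sqrt k * dist y x := by
              exact mul_le_mul_of_nonneg_left hy2 hsk0.le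
      exact ENNReal.ofReal_le_ofReal
        (Real.rpow_le_rpow_of_nonpos (by linarith) (by linarith) (by linarith))
    have step2 : μ (A j) ≤ ENNReal.ofReal (C₁ * ((2:ℝ)^(j+1)*δ) ^ (2*n)) :=
      (measure_mono Set.diff_subset).trans (hvol x _ (by positivity))
    have hident : C₁ * ((2:ℝ)^(j+1)*δ) ^ (2*n) = C₁ * 4^n * ((k:ℝ)^n)⁻¹ * (k^n * ((2:ℝ)^j*δ)^(2*n)) := by
      have h1 : ((2:ℝ)^(j+1)*δ) ^ (2*n) = 2^(2*n) * ((2:ℝ)^j*δ)^(2*n) := by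
        rw [pow_succ]
        rw [show (2:ℝ)^j * 2 * δ = 2 * ((2:ℝ)^j * δ) by ring, mul_pow]
      have h2 : (2:ℝ)^(2*n) = 4^n := by rw [pow_mul]; norm_num
      rw [h1, h2]
      field_simp
    have hvpow : k^n * ((2:ℝ)^j*δ)^(2*n) = v^(2*n) := by
      have hveq : v = Real.sqrt k * ((2:ℝ)^j * δ) := by rw [hv, hsdef]; ring
      symm
      rw [hveq, mul_pow, hsq]
    have hmin : v^(2*n) * (1+v)^(-(2*α)) ≤ min (v^(2*(n:ℝ))) (v^(-β)) := by
      have hvnn : (0:ℝ) ≤ v^(2*n) := by positivity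
      have hcast : v^(2*(n:ℝ)) = v^(2*n) := by
        rw [← Real.rpow_natCast v (2*n)]
        norm_num
      refine le_min ?_ ?_
      · have h1 : (1+v)^(-(2*α)) ≤ 1 :=
          Real.rpow_le_one_of_one_le_of_nonpos (by linarith) (by linarith)
        rw [hcast]
        nlinarith [Real.rpow_nonneg (by linarith : (0:ℝ) ≤ 1+v) (-(2*α))]
      · have h2 : (1+v)^(-(2*α)) ≤ v^(-(2*α)) :=
          Real.rpow_le_rpow_of_nonpos hv0 (by linarith) (by linarith)
        calc v^(2*n) * (1+v)^(-(2*α)) ≤ v^(2*n) * v^(-(2*α)) :=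
              mul_le_mul_of_nonneg_left h2 hvnn
          _ = v^(-β) := by
              rw [← hcast, ← Real.rpow_add hv0]
              congr 1
              rw [hβdef]; ring
    calc ∫⁻ y in A j, ENNReal.ofReal ((1 + Real.sqrt k * dist x y) ^ (-(2*α))) ∂μ
        ≤ ENNReal.ofReal ((1 + v) ^ (-(2*α))) * μ (A j) := step1
      _ ≤ ENNReal.ofReal ((1 + v) ^ (-(2*α))) * ENNReal.ofReal (C₁ * ((2:ℝ)^(j+1)*δ) ^ (2*n)) :=
          mul_le_mul_right step2 _
      _ = ENNReal.ofReal ((1 + v) ^ (-(2*α)) * (C₁ * ((2:ℝ)^(j+1)*δ) ^ (2*n))) :=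
          (ENNReal.ofReal_mul (by positivity)).symm
      _ ≤ ENNReal.ofReal (C₁ * 4^n * ((k:ℝ)^n)⁻¹ * min (((2:ℝ)^j * s)^(2*(n:ℝ))) (((2:ℝ)^j * s)^(-β))) := by
          apply ENNReal.ofReal_le_ofReal
          rw [hident, hvpow]
          calc (1 + v) ^ (-(2*α)) * (C₁ * 4^n * ((k:ℝ)^n)⁻¹ * v^(2*n))
              = C₁ * 4^n * ((k:ℝ)^n)⁻¹ * (v^(2*n) * (1+v)^(-(2*α))) := by ring
            _ ≤ C₁ * 4^n * ((k:ℝ)^n)⁻¹ * min (v^(2*(n:ℝ))) (v^(-β)) := by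
                apply mul_le_mul_of_nonneg_left hmin (by positivity)
  have hnpos : (0:ℝ) < 2*(n:ℝ) := by
    have : (1:ℝ) ≤ (n:ℝ) := by exact_mod_cast hn
    linarith
  have hβpos : (0:ℝ) < β := by rw [hβdef]; linarith
  obtain ⟨hsummin, hsumle⟩ := dyadic_sum hnpos hβpos hs
  calc ∫⁻ y in (Metric.ball x δ)ᶜ,
        ENNReal.ofReal ((1 + Real.sqrt k * dist x y) ^ (-(2*α))) ∂μ
      ≤ ∫⁻ y in ⋃ j, A j, ENNReal.ofReal ((1 + Real.sqrt k * dist x y) ^ (-(2*α))) ∂μ :=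
        lintegral_mono_set cover
    _ ≤ ∑' j : ℕ, ∫⁻ y in A j, ENNReal.ofReal ((1 + Real.sqrt k * dist x y) ^ (-(2*α))) ∂μ :=
        lintegral_iUnion_le _ _
    _ ≤ ∑' j : ℕ, ENNReal.ofReal (C₁ * 4^n * ((k:ℝ)^n)⁻¹ *
          min (((2:ℝ)^j * s)^(2*(n:ℝ))) (((2:ℝ)^j * s)^(-β))) :=
        ENNReal.tsum_le_tsum termbound
    _ = ENNReal.ofReal (∑' j : ℕ, C₁ * 4^n * ((k:ℝ)^n)⁻¹ *
          min (((2:ℝ)^j * s)^(2*(n:ℝ))) (((2:ℝ)^j * s)^(-β))) := by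
        rw [ENNReal.ofReal_tsum_of_nonneg (fun j => by positivity) (hsummin.mul_left _)]
    _ ≤ ENNReal.ofReal (C₁ * 4^n * ((k:ℝ)^n)⁻¹ *
          (((1 - 2^(-(2*(n:ℝ))))⁻¹ + (1 - 2^(-(2*α-2*(n:ℝ))))⁻¹)
            * min 1 (s^(-β)))) := by
        apply ENNReal.ofReal_le_ofReal
        rw [tsum_mul_left]
        apply mul_le_mul_of_nonneg_left _ (by positivity)
        exact hsumle

set_option maxHeartbeats 1000000 in
/-- Outer integral estimate. -/
lemma stmt13_outer {X : Type} [MetricSpace X] [MeasurableSpace X] [BorelSpace X]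
    (μ : Measure X) {n : ℕ} (hn : 1 ≤ n) {C₁ β : ℝ} (hC₁ : 0 < C₁) (hβ : 1 < β)
    (hvol : ∀ (x : X) (ρ : ℝ), 0 < ρ → μ (Metric.ball x ρ) ≤ ENNReal.ofReal (C₁ * ρ ^ (2*n)))
    (hshell : ∀ (x : X) (ρ t : ℝ), 0 < t → t ≤ ρ →
        μ (Metric.ball x (ρ + t) \ Metric.ball x ρ) ≤ ENNReal.ofReal (C₁ * ρ ^ (2*n-1) * t))
    {k : ℝ} (hk : 1 ≤ k) (z : X) {r : ℝ} (hr : 0 < r) :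
    ∫⁻ x in Metric.ball z (r / Real.sqrt k),
        ENNReal.ofReal (min 1 ((Real.sqrt k * (r / Real.sqrt k - dist x z)) ^ (-β))) ∂μ
      ≤ ENNReal.ofReal (C₁ * ((k:ℝ)^n)⁻¹ *
          (2 + ((1 - 2^(-(β-1)))⁻¹ + (1 - 2^(-(1:ℝ)))⁻¹)) * r^(2*n-1)) := by
  have hk0 : (0:ℝ) < k := by linarith
  have hsk0 : 0 < Real.sqrt k := Real.sqrt_pos.2 hk0
  set R : ℝ := r / Real.sqrt k with hRdef
  have hR0 : 0 < R := by positivity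
  have hkR : Real.sqrt k * R = r := by
    rw [hRdef, mul_comm, div_mul_cancel₀ r (ne_of_gt hsk0)]
  have hsq : Real.sqrt k ^ (2*n) = k^n := by rw [pow_mul, Real.sq_sqrt hk0.le]
  have hRn : R^(2*n) = r^(2*n) * ((k:ℝ)^n)⁻¹ := by
    rw [hRdef, div_pow, hsq, div_eq_mul_inv]
  have hrp : r^(2*n) = r^(2*n-1) * r := by
    rw [← pow_succ]
    congr 1
    omega
  have hE2 : 0 ≤ (1 - (2:ℝ)^(-(β-1)))⁻¹ + (1 - (2:ℝ)^(-(1:ℝ)))⁻¹ := by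
    have h1 := inv_one_sub_rpow_pos (by linarith : (0:ℝ) < β - 1)
    have h2 := inv_one_sub_rpow_pos (by norm_num : (0:ℝ) < (1:ℝ))
    linarith
  set E₂ : ℝ := (1 - (2:ℝ)^(-(β-1)))⁻¹ + (1 - (2:ℝ)^(-(1:ℝ)))⁻¹ with hE2def
  rcases le_or_gt r 2 with hr2 | hr2
  · -- small r : crude bound
    calc ∫⁻ x in Metric.ball z R,
          ENNReal.ofReal (min 1 ((Real.sqrt k * (R - dist x z)) ^ (-β))) ∂μ
        ≤ ∫⁻ _ in Metric.ball z R, 1 ∂μ :=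
          lintegral_mono (fun x => ENNReal.ofReal_le_one.2 (min_le_left _ _))
      _ = μ (Metric.ball z R) := setLIntegral_one _
      _ ≤ ENNReal.ofReal (C₁ * R^(2*n)) := hvol z R hR0
      _ ≤ ENNReal.ofReal (C₁ * ((k:ℝ)^n)⁻¹ * (2 + E₂) * r^(2*n-1)) := by
          apply ENNReal.ofReal_le_ofReal
          have hkn : (0:ℝ) < ((k:ℝ)^n)⁻¹ := by positivity
          have hrn : (0:ℝ) ≤ r^(2*n-1) := by positivity
          calc C₁ * R^(2*n) = (C₁ * ((k:ℝ)^n)⁻¹ * r^(2*n-1)) * r := by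
                rw [hRn, hrp]; ring
            _ ≤ (C₁ * ((k:ℝ)^n)⁻¹ * r^(2*n-1)) * (2 + E₂) := by
                apply mul_le_mul_of_nonneg_left (by linarith) (by positivity)
            _ = C₁ * ((k:ℝ)^n)⁻¹ * (2 + E₂) * r^(2*n-1) := by ring
  · -- large r : shell decomposition
    set S : ℕ → Set X := fun j =>
      Metric.ball z (R*(1 - ((2:ℝ)^(j+2))⁻¹)) \ Metric.ball z (R*(1 - ((2:ℝ)^(j+1))⁻¹)) with hS
    have cover : Metric.ball z R ⊆ Metric.ball z (R/2) ∪ ⋃ j, S j := by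
      intro x hx
      have hd : dist x z < R := Metric.mem_ball.1 hx
      by_cases hd2 : dist x z < R/2
      · exact Or.inl (Metric.mem_ball.2 hd2)
      · push_neg at hd2
        set δ : ℝ := R - dist x z with hδdef
        have hδ0 : 0 < δ := by rw [hδdef]; linarith
        have hδR : δ ≤ R/2 := by rw [hδdef]; linarith
        obtain ⟨j, h1, h2⟩ := dyadic_exists ((one_le_div hδ0).2 hδR)
        rw [le_div_iff₀ hδ0] at h1
        rw [div_lt_iff₀ hδ0] at h2
        have hp1 : (0:ℝ) < (2:ℝ)^(j+1) := by positivity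
        have hp2 : (0:ℝ) < (2:ℝ)^(j+2) := by positivity
        have e1 : (2:ℝ)^(j+1) * δ ≤ R := by
          rw [pow_succ]; nlinarith
        have e2 : R < (2:ℝ)^(j+2) * δ := by
          rw [pow_succ]; nlinarith
        refine Or.inr (Set.mem_iUnion.2 ⟨j, ?_, ?_⟩)
        · refine Metric.mem_ball.2 ?_
          have : R * ((2:ℝ)^(j+2))⁻¹ < δ := by
            rw [mul_inv_lt_iff₀ hp2]; nlinarith
          rw [hδdef] at this
          nlinarith
        · intro hmem
          have hlt := Metric.mem_ball.1 hmem
          have : δ ≤ R * ((2:ℝ)^(j+1))⁻¹ := by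
            rw [le_mul_inv_iff₀ hp1]; nlinarith
          rw [hδdef] at this
          nlinarith
    have hskR2 : Real.sqrt k * (R/2) = r/2 := by
      rw [← hkR]; ring
    -- bound on the inner half-ball
    have hB0 : ∫⁻ x in Metric.ball z (R/2),
          ENNReal.ofReal (min 1 ((Real.sqrt k * (R - dist x z)) ^ (-β))) ∂μ
        ≤ ENNReal.ofReal ((C₁ * R^(2*n) / r) * 2) := by
      have hpt : ∀ x ∈ Metric.ball z (R/2),
          ENNReal.ofReal (min 1 ((Real.sqrt k * (R - dist x z)) ^ (-β)))
            ≤ ENNReal.ofReal (2/r) := by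
        intro x hx
        have hdx : dist x z < R/2 := Metric.mem_ball.1 hx
        have hr20 : (0:ℝ) < r/2 := by linarith
        have hmono : r/2 ≤ Real.sqrt k * (R - dist x z) := by
          rw [← hskR2]
          apply mul_le_mul_of_nonneg_left (by linarith) hsk0.le
        have h1 : (Real.sqrt k * (R - dist x z)) ^ (-β) ≤ (r/2) ^ (-β) :=
          Real.rpow_le_rpow_of_nonpos hr20 hmono (by linarith)
        have h2 : (r/2 : ℝ) ^ (-β) ≤ (r/2) ^ (-(1:ℝ)) :=
          Real.rpow_le_rpow_of_exponent_le (by linarith) (by linarith)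
        have h3 : (r/2 : ℝ) ^ (-(1:ℝ)) = 2/r := by
          rw [Real.rpow_neg_one, inv_div]
        apply ENNReal.ofReal_le_ofReal
        calc min 1 ((Real.sqrt k * (R - dist x z)) ^ (-β))
            ≤ (Real.sqrt k * (R - dist x z)) ^ (-β) := min_le_right _ _
          _ ≤ 2/r := by rw [← h3]; exact h1.trans h2
      calc ∫⁻ x in Metric.ball z (R/2),
            ENNReal.ofReal (min 1 ((Real.sqrt k * (R - dist x z)) ^ (-β))) ∂μ
          ≤ ∫⁻ _ in Metric.ball z (R/2), ENNReal.ofReal (2/r) ∂μ :=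
            setLIntegral_mono' measurableSet_ball hpt
        _ = ENNReal.ofReal (2/r) * μ (Metric.ball z (R/2)) := setLIntegral_const _ _
        _ ≤ ENNReal.ofReal (2/r) * ENNReal.ofReal (C₁ * (R/2)^(2*n)) :=
            mul_le_mul_right (hvol z (R/2) (by linarith)) _
        _ = ENNReal.ofReal (2/r * (C₁ * (R/2)^(2*n))) :=
            (ENNReal.ofReal_mul (by positivity)).symm
        _ ≤ ENNReal.ofReal ((C₁ * R^(2*n) / r) * 2) := by
            apply ENNReal.ofReal_le_ofReal
            have hle : (R/2:ℝ)^(2*n) ≤ R^(2*n) :=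
              pow_le_pow_left₀ (by positivity) (by linarith) _
            have h2r : (0:ℝ) < 2/r := by positivity
            calc 2/r * (C₁ * (R/2)^(2*n)) ≤ 2/r * (C₁ * R^(2*n)) := by
                  apply mul_le_mul_of_nonneg_left _ h2r.le
                  exact mul_le_mul_of_nonneg_left hle hC₁.le
              _ = (C₁ * R^(2*n) / r) * 2 := by ring
    -- bound on the shells
    have hβ1 : (0:ℝ) < β - 1 := by linarith
    have hs4 : (0:ℝ) < 4/r := by positivity
    obtain ⟨hsummin, hsumle⟩ := dyadic_sum hβ1 (by norm_num : (0:ℝ) < 1) hs4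
    have termbound : ∀ j : ℕ,
        ∫⁻ x in S j, ENNReal.ofReal (min 1 ((Real.sqrt k * (R - dist x z)) ^ (-β))) ∂μ
          ≤ ENNReal.ofReal ((C₁ * R^(2*n) / r) *
              min (((2:ℝ)^j * (4/r))^(β-1)) (((2:ℝ)^j * (4/r))^(-(1:ℝ)))) := by
      intro j
      have hp1 : (0:ℝ) < (2:ℝ)^(j+1) := by positivity
      have hp2 : (0:ℝ) < (2:ℝ)^(j+2) := by positivity
      have hinv1 : ((2:ℝ)^(j+1))⁻¹ ≤ 1/2 := by
        rw [inv_le_comm₀ hp1 (by norm_num)]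
        rw [pow_succ]
        nlinarith [one_le_pow₀ (one_le_two (α := ℝ)) (n := j)]
      have hinv2 : ((2:ℝ)^(j+2))⁻¹ ≤ 1/4 := by
        rw [inv_le_comm₀ hp2 (by norm_num)]
        rw [pow_succ, pow_succ]
        nlinarith [one_le_pow₀ (one_le_two (α := ℝ)) (n := j)]
      set ρ : ℝ := R*(1 - ((2:ℝ)^(j+1))⁻¹) with hρ
      set t : ℝ := R*((2:ℝ)^(j+2))⁻¹ with ht
      have hinvsum : ((2:ℝ)^(j+2))⁻¹ + ((2:ℝ)^(j+2))⁻¹ = ((2:ℝ)^(j+1))⁻¹ := by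
        rw [show j+2 = (j+1)+1 from rfl, pow_succ]
        field_simp
        ring
      have hρt : ρ + t = R*(1 - ((2:ℝ)^(j+2))⁻¹) := by
        rw [hρ, ht]
        nlinarith [hinvsum]
      have ht0 : 0 < t := by rw [ht]; positivity
      have htρ : t ≤ ρ := by
        rw [ht, hρ]
        nlinarith
      have hρ0 : 0 ≤ ρ := by
        rw [hρ]
        nlinarith
      have hρR : ρ ≤ R := by
        rw [hρ]
        nlinarith [inv_pos.2 hp1]
      have hμS : μ (S j) ≤ ENNReal.ofReal (C₁ * R^(2*n-1) * t) := by
        have : S j = Metric.ball z (ρ + t) \ Metric.ball z ρ := by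
          rw [hS, hρt]
        rw [this]
        refine (hshell z ρ t ht0 htρ).trans (ENNReal.ofReal_le_ofReal ?_)
        have hpw : ρ^(2*n-1) ≤ R^(2*n-1) := pow_le_pow_left₀ hρ0 hρR _
        exact mul_le_mul_of_nonneg_right (mul_le_mul_of_nonneg_left hpw hC₁.le) ht0.le
      set w : ℝ := (2:ℝ)^j * (4/r) with hw
      have hw0 : 0 < w := by positivity
      have hwinv : r * ((2:ℝ)^(j+2))⁻¹ = w⁻¹ := by
        rw [hw, show (2:ℝ)^(j+2) = (2:ℝ)^j * 4 by rw [pow_succ, pow_succ]; ring]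
        field_simp
      have hτ : Real.sqrt k * (R * ((2:ℝ)^(j+2))⁻¹) = w⁻¹ := by
        rw [← hwinv, ← hkR]; ring
      have hpt : ∀ x ∈ S j,
          ENNReal.ofReal (min 1 ((Real.sqrt k * (R - dist x z)) ^ (-β)))
            ≤ ENNReal.ofReal (min 1 (w^β)) := by
        intro x hx
        have hx1 : dist x z < R*(1 - ((2:ℝ)^(j+2))⁻¹) := Metric.mem_ball.1 hx.1
        have hδlow : R * ((2:ℝ)^(j+2))⁻¹ ≤ R - dist x z := by nlinarith
        have hτ0 : (0:ℝ) < Real.sqrt k * (R * ((2:ℝ)^(j+2))⁻¹) := by positivity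
        have hanti : (Real.sqrt k * (R - dist x z)) ^ (-β)
            ≤ (Real.sqrt k * (R * ((2:ℝ)^(j+2))⁻¹)) ^ (-β) := by
          apply Real.rpow_le_rpow_of_nonpos hτ0 _ (by linarith)
          exact mul_le_mul_of_nonneg_left hδlow hsk0.le
        have heq : (Real.sqrt k * (R * ((2:ℝ)^(j+2))⁻¹)) ^ (-β) = w^β := by
          rw [hτ, ← Real.rpow_neg_one w, ← Real.rpow_mul hw0.le]
          norm_num
        apply ENNReal.ofReal_le_ofReal
        refine min_le_min le_rfl ?_
        rw [← heq]; exact hanti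
      calc ∫⁻ x in S j, ENNReal.ofReal (min 1 ((Real.sqrt k * (R - dist x z)) ^ (-β))) ∂μ
          ≤ ∫⁻ _ in S j, ENNReal.ofReal (min 1 (w^β)) ∂μ :=
            setLIntegral_mono' (measurableSet_ball.diff measurableSet_ball) hpt
        _ = ENNReal.ofReal (min 1 (w^β)) * μ (S j) := setLIntegral_const _ _
        _ ≤ ENNReal.ofReal (min 1 (w^β)) * ENNReal.ofReal (C₁ * R^(2*n-1) * t) :=
            mul_le_mul_right hμS _
        _ = ENNReal.ofReal (min 1 (w^β) * (C₁ * R^(2*n-1) * t)) :=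
            (ENNReal.ofReal_mul (le_min (by norm_num) (by positivity))).symm
        _ ≤ ENNReal.ofReal ((C₁ * R^(2*n) / r) *
              min (((2:ℝ)^j * (4/r))^(β-1)) (((2:ℝ)^j * (4/r))^(-(1:ℝ)))) := by
            apply ENNReal.ofReal_le_ofReal
            have hR2n : R^(2*n-1) * R = R^(2*n) := by
              rw [← pow_succ]
              congr 1
              omega
            have hwm : w⁻¹ * min 1 (w^β)
                = min (w^(β-1)) (w^(-(1:ℝ))) := by
              rw [mul_min_of_nonneg _ _ (inv_nonneg.2 hw0.le), mul_one]
              rw [min_comm]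
              congr 1
              · rw [← Real.rpow_neg_one w, ← Real.rpow_add hw0]
                congr 1; ring
              · rw [Real.rpow_neg_one]
            have hteq : min 1 (w^β) * (C₁ * R^(2*n-1) * t)
                = (C₁ * R^(2*n) / r) * (w⁻¹ * min 1 (w^β)) := by
              rw [ht, ← hR2n]
              rw [← hwinv]
              field_simp
            rw [hteq, hwm, hw]
      -- end termbound
    have hBsum : ∫⁻ x in ⋃ j, S j,
          ENNReal.ofReal (min 1 ((Real.sqrt k * (R - dist x z)) ^ (-β))) ∂μ
        ≤ ENNReal.ofReal ((C₁ * R^(2*n) / r) * E₂) := by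
      calc ∫⁻ x in ⋃ j, S j,
            ENNReal.ofReal (min 1 ((Real.sqrt k * (R - dist x z)) ^ (-β))) ∂μ
          ≤ ∑' j : ℕ, ∫⁻ x in S j,
              ENNReal.ofReal (min 1 ((Real.sqrt k * (R - dist x z)) ^ (-β))) ∂μ :=
            lintegral_iUnion_le _ _
        _ ≤ ∑' j : ℕ, ENNReal.ofReal ((C₁ * R^(2*n) / r) *
              min (((2:ℝ)^j * (4/r))^(β-1)) (((2:ℝ)^j * (4/r))^(-(1:ℝ)))) :=
            ENNReal.tsum_le_tsum termbound
        _ = ENNReal.ofReal (∑' j : ℕ, (C₁ * R^(2*n) / r) *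
              min (((2:ℝ)^j * (4/r))^(β-1)) (((2:ℝ)^j * (4/r))^(-(1:ℝ)))) := by
            rw [ENNReal.ofReal_tsum_of_nonneg (fun j => by positivity) (hsummin.mul_left _)]
        _ ≤ ENNReal.ofReal ((C₁ * R^(2*n) / r) * E₂) := by
            apply ENNReal.ofReal_le_ofReal
            rw [tsum_mul_left]
            apply mul_le_mul_of_nonneg_left _ (by positivity)
            refine hsumle.trans ?_
            rw [hE2def]
            have hm : min 1 ((4/r : ℝ)^(-(1:ℝ))) ≤ 1 := min_le_left _ _
            have h0 : (0:ℝ) ≤ (1 - (2:ℝ)^(-(β-1)))⁻¹ + (1 - (2:ℝ)^(-(1:ℝ)))⁻¹ := hE2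
            nlinarith
    calc ∫⁻ x in Metric.ball z R,
          ENNReal.ofReal (min 1 ((Real.sqrt k * (R - dist x z)) ^ (-β))) ∂μ
        ≤ ∫⁻ x in Metric.ball z (R/2) ∪ ⋃ j, S j,
            ENNReal.ofReal (min 1 ((Real.sqrt k * (R - dist x z)) ^ (-β))) ∂μ :=
          lintegral_mono_set cover
      _ ≤ (∫⁻ x in Metric.ball z (R/2),
            ENNReal.ofReal (min 1 ((Real.sqrt k * (R - dist x z)) ^ (-β))) ∂μ)
          + ∫⁻ x in ⋃ j, S j,
              ENNReal.ofReal (min 1 ((Real.sqrt k * (R - dist x z)) ^ (-β))) ∂μ :=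
          lintegral_union_le _ _ _
      _ ≤ ENNReal.ofReal ((C₁ * R^(2*n) / r) * 2) + ENNReal.ofReal ((C₁ * R^(2*n) / r) * E₂) :=
          add_le_add hB0 hBsum
      _ = ENNReal.ofReal ((C₁ * R^(2*n) / r) * 2 + (C₁ * R^(2*n) / r) * E₂) :=
          (ENNReal.ofReal_add (by positivity) (by positivity)).symm
      _ ≤ ENNReal.ofReal (C₁ * ((k:ℝ)^n)⁻¹ * (2 + E₂) * r^(2*n-1)) := by
          apply ENNReal.ofReal_le_ofReal
          have heq : C₁ * R^(2*n) / r = C₁ * ((k:ℝ)^n)⁻¹ * r^(2*n-1) := by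
            rw [hRn, hrp]
            field_simp
          rw [heq]
          ring_nf
          nlinarith [hE2, pow_nonneg hr.le (2*n-1), hC₁,
            inv_nonneg.2 (pow_nonneg hk0.le n)]

set_option maxHeartbeats 1000000 in
/-- Off-diagonal `L²` estimate: if the measure satisfies the volume bounds
`μ(B(x,ρ)) ≤ C₁ ρ^{2n}` and the shell bound, `φ` is a nonincreasing `C¹` function with
`φ(u) ≤ C₂ (1+u)^{−α}` for some `α > n + 1/2`, and `|K(x,y)| ≤ k^n φ(√k d(x,y))`, then there
is `A`, depending only on `n, C₁, C₂, α`, such that for all `z` and `r > 0`, with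
`Ω = B(z, r/√k)`, one has `∬_{Ω×Ωᶜ} |K(x,y)|² dμ dμ ≤ A r^{2n−1}`. -/
theorem stmt_13 (n : ℕ) (hn : 1 ≤ n) (C₁ C₂ α : ℝ)
    (hC₁ : 0 < C₁) (hC₂ : 0 < C₂) (hα : (n : ℝ) + 1 / 2 < α) :
    ∃ A : ℝ, 0 < A ∧
      ∀ (X : Type) [MetricSpace X] [MeasurableSpace X] [BorelSpace X] (μ : Measure X),
        (∀ (x : X) (ρ : ℝ), 0 < ρ →
          μ (Metric.ball x ρ) ≤ ENNReal.ofReal (C₁ * ρ ^ (2 * n))) →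
        (∀ (x : X) (ρ t : ℝ), 0 < t → t ≤ ρ →
          μ (Metric.ball x (ρ + t) \ Metric.ball x ρ)
            ≤ ENNReal.ofReal (C₁ * ρ ^ (2 * n - 1) * t)) →
        ∀ (φ : ℝ → ℝ), AntitoneOn φ (Set.Ici 0) → ContDiffOn ℝ 1 φ (Set.Ici 0) →
          (∀ u : ℝ, 0 ≤ u → 0 ≤ φ u) →
          (∀ u : ℝ, 0 ≤ u → φ u ≤ C₂ * (1 + u) ^ (-α)) →
          ∀ (k : ℝ), 1 ≤ k →
            ∀ (K : X → X → ℂ), Measurable (Function.uncurry K) →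
              (∀ x y : X, ‖K x y‖ ≤ k ^ n * φ (Real.sqrt k * dist x y)) →
              ∀ (z : X) (r : ℝ), 0 < r →
                ∫ x in Metric.ball z (r / Real.sqrt k),
                    ∫ y in (Metric.ball z (r / Real.sqrt k))ᶜ, ‖K x y‖ ^ 2 ∂μ ∂μ
                  ≤ A * r ^ (2 * n - 1) := by
  have hn1 : (1:ℝ) ≤ (n:ℝ) := by exact_mod_cast hn
  set β : ℝ := 2*α - 2*(n:ℝ) with hβdef
  have hβ : 1 < β := by rw [hβdef]; linarith
  set E₁ : ℝ := (1 - (2:ℝ)^(-(2*(n:ℝ))))⁻¹ + (1 - (2:ℝ)^(-(2*α-2*(n:ℝ))))⁻¹ with hE1def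
  set E₂ : ℝ := (1 - (2:ℝ)^(-(β-1)))⁻¹ + (1 - (2:ℝ)^(-(1:ℝ)))⁻¹ with hE2def
  have hE1 : 0 < E₁ := by
    have h1 := inv_one_sub_rpow_pos (by linarith : (0:ℝ) < 2*(n:ℝ))
    have h2 := inv_one_sub_rpow_pos (by linarith : (0:ℝ) < 2*α-2*(n:ℝ))
    rw [hE1def]; linarith
  have hE2 : 0 < 2 + E₂ := by
    have h1 := inv_one_sub_rpow_pos (by linarith : (0:ℝ) < β - 1)
    have h2 := inv_one_sub_rpow_pos (by norm_num : (0:ℝ) < (1:ℝ))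
    rw [hE2def]; linarith
  refine ⟨C₂^2 * (C₁ * 4^n * E₁) * (C₁ * (2 + E₂)), by positivity, ?_⟩
  intro X _ _ _ μ hvol hshell φ hφanti hφC1 hφ0 hφle k hk K hKmeas hKle z r hr
  have hk0 : (0:ℝ) < k := by linarith
  have hsk0 : 0 < Real.sqrt k := Real.sqrt_pos.2 hk0
  set R : ℝ := r / Real.sqrt k with hRdef
  have hR0 : 0 < R := by positivity
  set Ω : Set X := Metric.ball z R with hΩ
  -- pointwise bound on the kernel
  have hKsq : ∀ x y : X, ‖K x y‖^2
      ≤ (k^(2*n) * C₂^2) * (1 + Real.sqrt k * dist x y) ^ (-(2*α)) := by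
    intro x y
    set u : ℝ := Real.sqrt k * dist x y with hu
    have hu0 : 0 ≤ u := by positivity
    have h1 : ‖K x y‖ ≤ k^n * φ u := hKle x y
    have h2 : 0 ≤ φ u := hφ0 u hu0
    have h3 : φ u ≤ C₂ * (1+u)^(-α) := hφle u hu0
    have hkn : (0:ℝ) ≤ k^n := by positivity
    have h4 : ‖K x y‖^2 ≤ (k^n * φ u)^2 := by
      have := norm_nonneg (K x y)
      nlinarith
    have h5 : (k^n * φ u)^2 ≤ (k^n)^2 * (C₂ * (1+u)^(-α))^2 := by
      have h6 : (φ u)^2 ≤ (C₂ * (1+u)^(-α))^2 := by nlinarith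
      rw [mul_pow]
      nlinarith [sq_nonneg (k^n)]
    have h7 : ((1+u:ℝ)^(-α))^2 = (1+u)^(-(2*α)) := by
      rw [sq, ← Real.rpow_add (by linarith : (0:ℝ) < 1+u)]
      congr 1; ring
    have h8 : (k^n : ℝ)^2 = k^(2*n) := by
      rw [← pow_mul]
      congr 1; ring
    calc ‖K x y‖^2 ≤ (k^n)^2 * (C₂ * (1+u)^(-α))^2 := h4.trans h5
      _ = (k^(2*n) * C₂^2) * (1+u)^(-(2*α)) := by
          rw [mul_pow C₂, h7, h8]; ring
  -- inner function nonneg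
  have hg0 : ∀ x : X, 0 ≤ ∫ y in Ωᶜ, ‖K x y‖^2 ∂μ :=
    fun x => integral_nonneg (fun y => by positivity)
  -- reduce to lintegral
  have hred : ∫⁻ x in Ω, ENNReal.ofReal (∫ y in Ωᶜ, ‖K x y‖^2 ∂μ) ∂μ
      ≤ ∫⁻ x in Ω, ∫⁻ y in Ωᶜ, ENNReal.ofReal (‖K x y‖^2) ∂μ ∂μ := by
    apply lintegral_mono
    intro x
    refine le_trans (ENNReal.ofReal_le_ofReal (int_le_lint (μ.restrict Ωᶜ) _
      (fun y => by positivity))) ?_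
    exact ENNReal.ofReal_toReal_le
  -- main lintegral estimate
  have hmain : ∫⁻ x in Ω, ∫⁻ y in Ωᶜ, ENNReal.ofReal (‖K x y‖^2) ∂μ ∂μ
      ≤ ENNReal.ofReal (C₂^2 * (C₁ * 4^n * E₁) * (C₁ * (2 + E₂)) * r^(2*n-1)) := by
    have hc1 : (0:ℝ) ≤ k^(2*n) * C₂^2 := by positivity
    have step1 : ∀ x : X, ∫⁻ y in Ωᶜ, ENNReal.ofReal (‖K x y‖^2) ∂μ
        ≤ ENNReal.ofReal (k^(2*n) * C₂^2) *
          ∫⁻ y in Ωᶜ, ENNReal.ofReal ((1 + Real.sqrt k * dist x y) ^ (-(2*α))) ∂μ := by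
      intro x
      rw [← lintegral_const_mul' _ _ ENNReal.ofReal_ne_top]
      apply lintegral_mono
      intro y
      dsimp only
      rw [← ENNReal.ofReal_mul hc1]
      exact ENNReal.ofReal_le_ofReal (hKsq x y)
    have step2 : ∀ x ∈ Ω,
        ∫⁻ y in Ωᶜ, ENNReal.ofReal ((1 + Real.sqrt k * dist x y) ^ (-(2*α))) ∂μ
          ≤ ENNReal.ofReal (C₁ * 4^n * ((k:ℝ)^n)⁻¹ * E₁) *
            ENNReal.ofReal (min 1 ((Real.sqrt k * (R - dist x z))^(-β))) := by
      intro x hx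
      have hdx : dist x z < R := Metric.mem_ball.1 hx
      set δ : ℝ := R - dist x z with hδdef
      have hδ0 : 0 < δ := by rw [hδdef]; linarith
      have hsubset : Ωᶜ ⊆ (Metric.ball x δ)ᶜ := by
        intro y hy
        intro hmem
        apply hy
        have h1 : dist y x < δ := Metric.mem_ball.1 hmem
        have : dist y z < R := by
          calc dist y z ≤ dist y x + dist x z := dist_triangle y x z
            _ < δ + dist x z := by linarith
            _ = R := by rw [hδdef]; ring
        exact Metric.mem_ball.2 this
      calc ∫⁻ y in Ωᶜ, ENNReal.ofReal ((1 + Real.sqrt k * dist x y) ^ (-(2*α))) ∂μ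
          ≤ ∫⁻ y in (Metric.ball x δ)ᶜ,
              ENNReal.ofReal ((1 + Real.sqrt k * dist x y) ^ (-(2*α))) ∂μ :=
            lintegral_mono_set hsubset
        _ ≤ ENNReal.ofReal (C₁ * 4^n * ((k:ℝ)^n)⁻¹ *
              (E₁ * min 1 ((Real.sqrt k * δ)^(-(2*α - 2*(n:ℝ)))))) :=
            stmt13_inner μ hn hC₁ (by linarith) hvol hk x hδ0
        _ = ENNReal.ofReal (C₁ * 4^n * ((k:ℝ)^n)⁻¹ * E₁) *
              ENNReal.ofReal (min 1 ((Real.sqrt k * δ)^(-β))) := by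
            rw [← ENNReal.ofReal_mul (by positivity), ← hβdef]
            congr 1
            ring
    calc ∫⁻ x in Ω, ∫⁻ y in Ωᶜ, ENNReal.ofReal (‖K x y‖^2) ∂μ ∂μ
        ≤ ∫⁻ x in Ω, ENNReal.ofReal (k^(2*n) * C₂^2) *
            (ENNReal.ofReal (C₁ * 4^n * ((k:ℝ)^n)⁻¹ * E₁) *
              ENNReal.ofReal (min 1 ((Real.sqrt k * (R - dist x z))^(-β)))) ∂μ := by
          apply setLIntegral_mono' measurableSet_ball
          intro x hx
          exact (step1 x).trans (mul_le_mul_right (step2 x hx) _)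
      _ = ENNReal.ofReal (k^(2*n) * C₂^2) * (ENNReal.ofReal (C₁ * 4^n * ((k:ℝ)^n)⁻¹ * E₁) *
            ∫⁻ x in Ω, ENNReal.ofReal (min 1 ((Real.sqrt k * (R - dist x z))^(-β))) ∂μ) := by
          simp_rw [← mul_assoc]
          exact lintegral_const_mul' _ _
            (ENNReal.mul_ne_top ENNReal.ofReal_ne_top ENNReal.ofReal_ne_top)
      _ ≤ ENNReal.ofReal (k^(2*n) * C₂^2) * (ENNReal.ofReal (C₁ * 4^n * ((k:ℝ)^n)⁻¹ * E₁) *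
            ENNReal.ofReal (C₁ * ((k:ℝ)^n)⁻¹ * (2 + E₂) * r^(2*n-1))) := by
          apply mul_le_mul_right
          apply mul_le_mul_right
          exact stmt13_outer μ hn hC₁ hβ hvol hshell hk z hr
      _ ≤ ENNReal.ofReal (C₂^2 * (C₁ * 4^n * E₁) * (C₁ * (2 + E₂)) * r^(2*n-1)) := by
          rw [← ENNReal.ofReal_mul (by positivity), ← ENNReal.ofReal_mul (by positivity)]
          apply ENNReal.ofReal_le_ofReal
          apply le_of_eq
          have hkid : k^(2*n) * ((k:ℝ)^n)⁻¹ * ((k:ℝ)^n)⁻¹ = 1 := by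
            rw [show 2*n = n + n by ring, pow_add]
            field_simp
          calc k ^ (2 * n) * C₂ ^ 2 * (C₁ * 4 ^ n * ((k:ℝ) ^ n)⁻¹ * E₁ *
                (C₁ * ((k:ℝ) ^ n)⁻¹ * (2 + E₂) * r ^ (2 * n - 1)))
              = (k^(2*n) * ((k:ℝ)^n)⁻¹ * ((k:ℝ)^n)⁻¹) *
                (C₂^2 * (C₁ * 4^n * E₁) * (C₁ * (2 + E₂)) * r^(2*n-1)) := by ring
            _ = C₂^2 * (C₁ * 4^n * E₁) * (C₁ * (2 + E₂)) * r^(2*n-1) := by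
                rw [hkid, one_mul]
  calc ∫ x in Ω, ∫ y in Ωᶜ, ‖K x y‖^2 ∂μ ∂μ
      ≤ (∫⁻ x in Ω, ENNReal.ofReal (∫ y in Ωᶜ, ‖K x y‖^2 ∂μ) ∂μ).toReal :=
        int_le_lint (μ.restrict Ω) _ hg0
    _ ≤ (ENNReal.ofReal (C₂^2 * (C₁ * 4^n * E₁) * (C₁ * (2 + E₂)) * r^(2*n-1))).toReal :=
        ENNReal.toReal_mono ENNReal.ofReal_ne_top (hred.trans hmain)
    _ = C₂^2 * (C₁ * 4^n * E₁) * (C₁ * (2 + E₂)) * r^(2*n-1) :=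
        ENNReal.toReal_ofReal (by positivity)
end

section
/- Let (X, d) be a metric space with a Borel measure μ, let n ≥ 1 be an integer, and let C₁, C₂, c > 0 be constants with μ(B(x, ρ)) ≤ C₁ ρ^{2n} for all x ∈ X and ρ > 0, and μ(B(x, ρ+t) ∖ B(x, ρ)) ≤ C₁ ρ^{2n−1} t for all x ∈ X and 0 < t ≤ ρ. Let k ≥ 1 and let K : X × X → ℂ be measurable with |K(x, y)| ≤ C₂ k^n e^{−c √k d(x, y)} for all x, y ∈ X. Then there is a constant A, depending only on n, C₁, C₂ and c, such that for every z ∈ X and R > 0, with Ω = B(z, R/√k): k^n ∬_{Ω×Ω^c} |K(x, y)| dμ(x) dμ(y) ≤ A R^{2n−1}. -/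
open MeasureTheory


lemma decay_aux (m j : ℕ) :
    (j : ℝ) ^ m * Real.exp (-(j : ℝ)) ≤ 2 ^ m * m.factorial * Real.exp (-(j : ℝ) / 2) := by
  have h1 : ((j : ℝ) / 2) ^ m / m.factorial ≤ Real.exp ((j : ℝ) / 2) :=
    Real.pow_div_factorial_le_exp (x := (j : ℝ) / 2) (by positivity) m
  have h2 : (j : ℝ) ^ m ≤ 2 ^ m * m.factorial * Real.exp ((j : ℝ) / 2) := by
    have hfac : (0 : ℝ) < m.factorial := by positivity
    rw [div_pow, div_le_iff₀ hfac] at h1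
    calc (j : ℝ) ^ m = ((j : ℝ) ^ m / 2 ^ m) * 2 ^ m := by field_simp
      _ ≤ (Real.exp ((j : ℝ) / 2) * m.factorial) * 2 ^ m :=
          mul_le_mul_of_nonneg_right h1 (by positivity)
      _ = 2 ^ m * m.factorial * Real.exp ((j : ℝ) / 2) := by ring
  calc (j : ℝ) ^ m * Real.exp (-(j : ℝ))
      ≤ (2 ^ m * m.factorial * Real.exp ((j : ℝ) / 2)) * Real.exp (-(j : ℝ)) :=
        mul_le_mul_of_nonneg_right h2 (Real.exp_pos _).le
    _ = 2 ^ m * m.factorial * (Real.exp ((j : ℝ) / 2) * Real.exp (-(j : ℝ))) := by ring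
    _ = 2 ^ m * m.factorial * Real.exp (-(j : ℝ) / 2) := by
        rw [← Real.exp_add]; ring_nf

lemma geom_aux (C : ENNReal) :
    (∑' j : ℕ, (ENNReal.ofReal (Real.exp (-(1:ℝ)/2))) ^ j * C) ≤ 3 * C := by
  rw [ENNReal.tsum_mul_right, ENNReal.tsum_geometric]
  apply mul_le_mul_left _ C
  have hq : Real.exp (-(1:ℝ)/2) ≤ 2/3 := by
    have h := Real.add_one_le_exp (1/2 : ℝ)
    have h2 : Real.exp (-(1:ℝ)/2) = (Real.exp (1/2 : ℝ))⁻¹ := by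
      rw [← Real.exp_neg]; norm_num
    rw [h2, inv_le_comm₀ (by positivity) (by norm_num)]
    linarith
  have e1 : (3:ENNReal)⁻¹ = ENNReal.ofReal (3⁻¹ : ℝ) := by
    rw [ENNReal.ofReal_inv_of_pos (by norm_num), ENNReal.ofReal_ofNat]
  have h13 : (3:ENNReal)⁻¹ ≤ 1 - ENNReal.ofReal (Real.exp (-(1:ℝ)/2)) := by
    have hmono : 1 - ENNReal.ofReal (2/3:ℝ) ≤ 1 - ENNReal.ofReal (Real.exp (-(1:ℝ)/2)) :=
      tsub_le_tsub_left (ENNReal.ofReal_le_ofReal hq) 1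
    refine le_trans (le_of_eq ?_) hmono
    rw [e1, ← ENNReal.ofReal_one, ← ENNReal.ofReal_sub _ (by norm_num)]
    norm_num
  calc (1 - ENNReal.ofReal (Real.exp (-(1:ℝ)/2)))⁻¹ ≤ ((3:ENNReal)⁻¹)⁻¹ :=
        ENNReal.inv_le_inv.mpr h13
    _ = 3 := inv_inv 3

lemma piece_bound {X : Type} [MeasurableSpace X] (μ : Measure X) (S : Set X)
    (h : X → ℝ) (c : ℝ) (hb : ∀ y ∈ S, h y ≤ c) :
    ∫⁻ y in S, ENNReal.ofReal (h y) ∂μ ≤ ENNReal.ofReal c * μ S := by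
  calc ∫⁻ y in S, ENNReal.ofReal (h y) ∂μ
      ≤ ∫⁻ _ in S, ENNReal.ofReal c ∂μ :=
        setLIntegral_mono measurable_const (fun y hy => ENNReal.ofReal_le_ofReal (hb y hy))
    _ = ENNReal.ofReal c * μ S := setLIntegral_const S _

lemma lemma_inner {X : Type} [MetricSpace X] [MeasurableSpace X] [BorelSpace X]
    (μ : Measure X) (n : ℕ) (hn : 1 ≤ n) (C₁ : ℝ) (hC₁ : 0 < C₁)
    (hball : ∀ (x : X) (ρ : ℝ), 0 < ρ →
      μ (Metric.ball x ρ) ≤ ENNReal.ofReal (C₁ * ρ ^ (2 * n)))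
    (hshell : ∀ (x : X) (ρ t : ℝ), 0 < t → t ≤ ρ →
      μ (Metric.ball x (ρ + t) \ Metric.ball x ρ) ≤ ENNReal.ofReal (C₁ * ρ ^ (2 * n - 1) * t))
    (b : ℝ) (hb : 0 < b) (x : X) :
    ∫⁻ y, ENNReal.ofReal (Real.exp (-b * dist x y)) ∂μ
      ≤ ENNReal.ofReal (3 * (C₁ * (2 ^ (2*n-1) * (2*n-1).factorial)) / b ^ (2*n)) := by
  set m := 2*n-1 with hm
  have hm1 : m + 1 = 2*n := by omega
  set Cm : ℝ := 2 ^ m * (m.factorial : ℝ) with hCm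
  have hCm1 : (1:ℝ) ≤ Cm := by
    have : (1:ℝ) ≤ (m.factorial : ℝ) := by exact_mod_cast Nat.one_le_iff_ne_zero.mpr m.factorial_ne_zero
    nlinarith [one_le_pow₀ (by norm_num : (1:ℝ) ≤ 2) (n := m)]
  set S : ℕ → Set X := fun j => if j = 0 then Metric.ball x (1/b)
    else Metric.ball x ((j+1)/b) \ Metric.ball x (j/b) with hS
  have hcover : (Set.univ : Set X) ⊆ ⋃ j, S j := by
    intro y _
    set t := dist x y with ht
    have ht0 : 0 ≤ t := dist_nonneg
    refine Set.mem_iUnion.2 ⟨⌊b*t⌋₊, ?_⟩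
    rcases Nat.eq_zero_or_pos ⌊b*t⌋₊ with h0 | hpos
    · rw [hS]; simp only [h0, if_pos rfl]
      have : b*t < 1 := by
        have := Nat.lt_floor_add_one (b*t)
        rw [h0] at this; simpa using this
      have : t < 1/b := by rw [lt_div_iff₀ hb]; linarith [mul_comm b t]
      simpa [dist_comm] using this
    · rw [hS]; simp only [Nat.pos_iff_ne_zero.mp hpos, if_neg (Nat.pos_iff_ne_zero.mp hpos)]
      constructor
      · have h2 : b*t < ⌊b*t⌋₊ + 1 := Nat.lt_floor_add_one _
        have : t < ((⌊b*t⌋₊:ℝ)+1)/b := by rw [lt_div_iff₀ hb]; linarith [mul_comm b t]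
        simpa [dist_comm] using this
      · intro hmem
        rw [Metric.mem_ball, dist_comm] at hmem
        have : t < (⌊b*t⌋₊:ℝ)/b := hmem
        have h3 : (⌊b*t⌋₊:ℝ) ≤ b*t := Nat.floor_le (by positivity)
        rw [lt_div_iff₀ hb] at this
        nlinarith
  set q : ENNReal := ENNReal.ofReal (Real.exp (-(1:ℝ)/2)) with hq
  set D : ℝ := C₁ * Cm / b ^ (2*n) with hD
  have hD0 : 0 ≤ D := by positivity
  have hterm : ∀ j : ℕ, ∫⁻ y in S j, ENNReal.ofReal (Real.exp (-b * dist x y)) ∂μ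
      ≤ q ^ j * ENNReal.ofReal D := by
    intro j
    rcases Nat.eq_zero_or_pos j with h0 | hpos
    · subst h0
      have hSj : S 0 = Metric.ball x (1/b) := by simp [hS]
      calc ∫⁻ y in S 0, ENNReal.ofReal (Real.exp (-b * dist x y)) ∂μ
          ≤ ENNReal.ofReal 1 * μ (S 0) := by
            apply piece_bound
            intro y _
            rw [Real.exp_le_one_iff]
            have := dist_nonneg (x := x) (y := y)
            nlinarith
        _ ≤ ENNReal.ofReal 1 * ENNReal.ofReal (C₁ * (1/b) ^ (2*n)) := by
            rw [hSj]; exact mul_le_mul_right (hball x (1/b) (by positivity)) _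
        _ = ENNReal.ofReal (C₁ * (1/b) ^ (2*n)) := by simp
        _ ≤ q ^ 0 * ENNReal.ofReal D := by
            rw [pow_zero, one_mul]
            apply ENNReal.ofReal_le_ofReal
            rw [hD, div_pow, one_pow, mul_one_div]
            have hbp : (0:ℝ) < b ^ (2*n) := by positivity
            rw [div_le_div_iff₀ hbp hbp]
            nlinarith [mul_le_mul_of_nonneg_right hCm1 (mul_pos hC₁ hbp).le]
    · have hj0 : j ≠ 0 := Nat.pos_iff_ne_zero.mp hpos
      have hSj : S j = Metric.ball x ((j+1)/b) \ Metric.ball x (j/b) := by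
        rw [hS]; simp [hj0]
      have hj1 : (1:ℝ) ≤ (j:ℝ) := by exact_mod_cast hpos
      calc ∫⁻ y in S j, ENNReal.ofReal (Real.exp (-b * dist x y)) ∂μ
          ≤ ENNReal.ofReal (Real.exp (-(j:ℝ))) * μ (S j) := by
            apply piece_bound
            intro y hy
            rw [hSj] at hy
            have hd : (j:ℝ)/b ≤ dist x y := by
              have := hy.2
              rw [Metric.mem_ball, dist_comm] at this
              exact le_of_not_gt this
            apply Real.exp_le_exp.mpr
            rw [div_le_iff₀ hb] at hd
            nlinarith
        _ ≤ ENNReal.ofReal (Real.exp (-(j:ℝ))) * ENNReal.ofReal (C₁ * ((j:ℝ)/b) ^ m * (1/b)) := by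
            apply mul_le_mul_right
            rw [hSj]
            have harg : ((j:ℝ)+1)/b = (j:ℝ)/b + 1/b := by ring
            rw [harg]
            exact hshell x ((j:ℝ)/b) (1/b) (by positivity)
              (by rw [div_le_div_iff₀ hb hb]; nlinarith)
        _ = ENNReal.ofReal (Real.exp (-(j:ℝ)) * (C₁ * ((j:ℝ)/b) ^ m * (1/b))) := by
            rw [ENNReal.ofReal_mul (Real.exp_pos _).le]
        _ ≤ q ^ j * ENNReal.ofReal D := by
            rw [hq, ← ENNReal.ofReal_pow (Real.exp_pos _).le,
              ← ENNReal.ofReal_mul (by positivity)]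
            apply ENNReal.ofReal_le_ofReal
            have hbm : b ^ m * b = b ^ (2*n) := by rw [← pow_succ, hm1]
            have hstep : Real.exp (-(j:ℝ)) * (C₁ * ((j:ℝ)/b) ^ m * (1/b))
                = C₁ * ((j:ℝ) ^ m * Real.exp (-(j:ℝ))) / b ^ (2*n) := by
              rw [div_pow, ← hbm]
              field_simp
            rw [hstep]
            have hdecay : (j:ℝ) ^ m * Real.exp (-(j:ℝ)) ≤ Cm * Real.exp (-(j:ℝ)/2) := by
              rw [hCm]; exact decay_aux m j
            have hexp : Real.exp (-(j:ℝ)/2) = Real.exp (-(1:ℝ)/2) ^ j := by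
              rw [← Real.exp_nat_mul]
              congr 1
              ring
            calc C₁ * ((j:ℝ) ^ m * Real.exp (-(j:ℝ))) / b ^ (2*n)
                ≤ C₁ * (Cm * Real.exp (-(j:ℝ)/2)) / b ^ (2*n) := by gcongr
              _ = Real.exp (-(1:ℝ)/2) ^ j * D := by rw [hexp, hD]; ring
  calc ∫⁻ y, ENNReal.ofReal (Real.exp (-b * dist x y)) ∂μ
      = ∫⁻ y in Set.univ, ENNReal.ofReal (Real.exp (-b * dist x y)) ∂μ :=
        (setLIntegral_univ _).symm
    _ ≤ ∫⁻ y in ⋃ j, S j, ENNReal.ofReal (Real.exp (-b * dist x y)) ∂μ :=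
        lintegral_mono_set hcover
    _ ≤ ∑' j, ∫⁻ y in S j, ENNReal.ofReal (Real.exp (-b * dist x y)) ∂μ :=
        lintegral_iUnion_le _ _
    _ ≤ ∑' j : ℕ, q ^ j * ENNReal.ofReal D := ENNReal.tsum_le_tsum hterm
    _ ≤ 3 * ENNReal.ofReal D := geom_aux _
    _ = ENNReal.ofReal (3 * (C₁ * (2 ^ (2*n-1) * (2*n-1).factorial)) / b ^ (2*n)) := by
        rw [show (3:ENNReal) = ENNReal.ofReal 3 by norm_num,
          ← ENNReal.ofReal_mul (by norm_num)]
        congr 1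
        rw [hD, hCm]
        ring

lemma lemma_outer {X : Type} [MetricSpace X] [MeasurableSpace X] [BorelSpace X]
    (μ : Measure X) (n : ℕ) (hn : 1 ≤ n) (C₁ : ℝ) (hC₁ : 0 < C₁)
    (hball : ∀ (x : X) (ρ : ℝ), 0 < ρ →
      μ (Metric.ball x ρ) ≤ ENNReal.ofReal (C₁ * ρ ^ (2 * n)))
    (hshell : ∀ (x : X) (ρ t : ℝ), 0 < t → t ≤ ρ →
      μ (Metric.ball x (ρ + t) \ Metric.ball x ρ) ≤ ENNReal.ofReal (C₁ * ρ ^ (2 * n - 1) * t))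
    (b : ℝ) (hb : 0 < b) (z : X) (r : ℝ) (hr : 0 < r) :
    ∫⁻ x in Metric.ball z r, ENNReal.ofReal (Real.exp (-b * (r - dist z x))) ∂μ
      ≤ ENNReal.ofReal (3 * (2 ^ (2*n) * C₁) * r ^ (2*n-1) / b) := by
  set m := 2*n-1 with hm
  have hm1 : m + 1 = 2*n := by omega
  set T : ℕ → Set X := fun j =>
    Metric.ball z (r - j/b) \ Metric.ball z (r - (j+1)/b) with hT
  have hcover : Metric.ball z r ⊆ ⋃ j, T j := by
    intro x hx
    rw [Metric.mem_ball, dist_comm] at hx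
    set u := r - dist z x with hu
    have hu0 : 0 < u := by simp [hu]; linarith
    have hbu : 0 < b * u := mul_pos hb hu0
    set j := ⌈b*u⌉₊ - 1 with hj
    have hjc : j + 1 = ⌈b*u⌉₊ := by
      have : 1 ≤ ⌈b*u⌉₊ := Nat.one_le_ceil_iff.mpr hbu
      omega
    refine Set.mem_iUnion.2 ⟨j, ?_, ?_⟩
    · rw [Metric.mem_ball, dist_comm]
      have h1 : (j:ℝ) < b*u := by
        have h2 : (⌈b*u⌉₊:ℝ) < b*u + 1 := Nat.ceil_lt_add_one hbu.le
        have h3 : ((j:ℕ):ℝ) = (⌈b*u⌉₊:ℝ) - 1 := by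
          rw [← hjc]; push_cast; ring
        linarith
      have : (j:ℝ)/b < u := by rw [div_lt_iff₀ hb]; linarith [mul_comm b u]
      linarith
    · rw [Metric.mem_ball, dist_comm]
      push_neg
      have h1 : b*u ≤ (j:ℝ)+1 := by
        have := Nat.le_ceil (b*u)
        rw [← hjc] at this; push_cast at this; linarith
      have : u ≤ ((j:ℝ)+1)/b := by rw [le_div_iff₀ hb]; linarith [mul_comm b u]
      linarith
  set E : ℝ := 2 ^ (2*n) * C₁ * r ^ m / b with hE
  have hE0 : 0 ≤ E := by positivity
  have hmuT : ∀ j : ℕ, μ (T j) ≤ ENNReal.ofReal E := by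
    intro j
    rcases le_or_gt (r - (j:ℝ)/b) 0 with hneg | hpos
    · have : T j ⊆ (∅ : Set X) := by
        rw [hT]
        intro x hx
        exact absurd hx.1 (by rw [Metric.ball_eq_empty.mpr hneg]; exact id)
      calc μ (T j) ≤ μ (∅ : Set X) := measure_mono this
        _ = 0 := measure_empty
        _ ≤ _ := zero_le
    rcases le_or_gt (1/b) (r - ((j:ℝ)+1)/b) with hcase | hcase
    · have harg : r - (j:ℝ)/b = (r - ((j:ℝ)+1)/b) + 1/b := by ring
      have hρ0 : 0 ≤ r - ((j:ℝ)+1)/b := le_trans (by positivity) hcase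
      calc μ (T j) ≤ ENNReal.ofReal (C₁ * (r - ((j:ℝ)+1)/b) ^ m * (1/b)) := by
            rw [hT]
            simp only []
            rw [harg]
            exact hshell z _ _ (by positivity) hcase
        _ ≤ ENNReal.ofReal E := by
            apply ENNReal.ofReal_le_ofReal
            rw [hE]
            have h1 : (r - ((j:ℝ)+1)/b) ^ m ≤ r ^ m := by
              apply pow_le_pow_left₀ hρ0
              have : 0 ≤ ((j:ℝ)+1)/b := by positivity
              linarith
            have h2 : (1:ℝ) ≤ 2 ^ (2*n) := one_le_pow₀ (by norm_num)
            have hrm : (0:ℝ) ≤ r ^ m := by positivity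
            rw [mul_one_div, div_le_div_iff₀ hb hb]
            have h3 : C₁ * (r - ((j:ℝ)+1)/b) ^ m * b ≤ C₁ * r ^ m * b :=
              mul_le_mul_of_nonneg_right (mul_le_mul_of_nonneg_left h1 hC₁.le) hb.le
            have h4 : C₁ * r ^ m * b ≤ 2 ^ (2*n) * (C₁ * r ^ m * b) :=
              le_mul_of_one_le_left (by positivity) h2
            nlinarith
    · have hlt : r - (j:ℝ)/b < 2/b := by
        have : ((j:ℝ)+1)/b = (j:ℝ)/b + 1/b := by ring
        rw [this] at hcase
        have h2b : (2:ℝ)/b = 1/b + 1/b := by ring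
        linarith
      calc μ (T j) ≤ μ (Metric.ball z (r - (j:ℝ)/b)) := by
            apply measure_mono
            rw [hT]
            exact Set.diff_subset
        _ ≤ ENNReal.ofReal (C₁ * (r - (j:ℝ)/b) ^ (2*n)) := hball z _ hpos
        _ ≤ ENNReal.ofReal E := by
            apply ENNReal.ofReal_le_ofReal
            rw [hE]
            have hsp : (r - (j:ℝ)/b) ^ (2*n) = (r - (j:ℝ)/b) ^ m * (r - (j:ℝ)/b) := by
              rw [← pow_succ, hm1]
            have h1 : (r - (j:ℝ)/b) ^ m ≤ r ^ m := by
              apply pow_le_pow_left₀ hpos.le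
              have : 0 ≤ (j:ℝ)/b := by positivity
              linarith
            have h2 : (2:ℝ) ≤ 2 ^ (2*n) := by
              calc (2:ℝ) = 2^1 := (pow_one 2).symm
                _ ≤ 2^(2*n) := pow_le_pow_right₀ (by norm_num) (by omega)
            have hrm : (0:ℝ) ≤ r ^ m := by positivity
            rw [hsp, le_div_iff₀ hb]
            have hρm : (0:ℝ) ≤ (r - (j:ℝ)/b) ^ m := pow_nonneg hpos.le m
            have h5 : (r - (j:ℝ)/b) * b < 2 := (lt_div_iff₀ hb).mp hlt
            nlinarith [mul_le_mul_of_nonneg_left h5.le (mul_nonneg hC₁.le hρm),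
              mul_le_mul_of_nonneg_left h1 (by positivity : (0:ℝ) ≤ 2*C₁),
              mul_le_mul_of_nonneg_right h2 (mul_nonneg hC₁.le hrm)]
  have hterm : ∀ j : ℕ, ∫⁻ x in T j, ENNReal.ofReal (Real.exp (-b * (r - dist z x))) ∂μ
      ≤ (ENNReal.ofReal (Real.exp (-(1:ℝ)/2))) ^ j * ENNReal.ofReal E := by
    intro j
    calc ∫⁻ x in T j, ENNReal.ofReal (Real.exp (-b * (r - dist z x))) ∂μ
        ≤ ENNReal.ofReal (Real.exp (-(j:ℝ))) * μ (T j) := by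
          apply piece_bound
          intro x hx
          rw [hT] at hx
          have h1 : dist z x < r - (j:ℝ)/b := by
            have := hx.1; rwa [Metric.mem_ball, dist_comm] at this
          apply Real.exp_le_exp.mpr
          have : (j:ℝ)/b < r - dist z x := by linarith
          rw [div_lt_iff₀ hb] at this
          nlinarith
      _ ≤ ENNReal.ofReal (Real.exp (-(j:ℝ))) * ENNReal.ofReal E :=
          mul_le_mul_right (hmuT j) _
      _ = ENNReal.ofReal (Real.exp (-(j:ℝ)) * E) := by
          rw [ENNReal.ofReal_mul (Real.exp_pos _).le]
      _ ≤ (ENNReal.ofReal (Real.exp (-(1:ℝ)/2))) ^ j * ENNReal.ofReal E := by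
          rw [← ENNReal.ofReal_pow (Real.exp_pos _).le,
            ← ENNReal.ofReal_mul (by positivity)]
          apply ENNReal.ofReal_le_ofReal
          have hexp : Real.exp (-(1:ℝ)/2) ^ j = Real.exp (-(j:ℝ)/2) := by
            rw [← Real.exp_nat_mul]; congr 1; ring
          rw [hexp]
          have : Real.exp (-(j:ℝ)) ≤ Real.exp (-(j:ℝ)/2) := by
            apply Real.exp_le_exp.mpr
            have : (0:ℝ) ≤ (j:ℝ) := Nat.cast_nonneg j
            linarith
          nlinarith
  calc ∫⁻ x in Metric.ball z r, ENNReal.ofReal (Real.exp (-b * (r - dist z x))) ∂μ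
      ≤ ∫⁻ x in ⋃ j, T j, ENNReal.ofReal (Real.exp (-b * (r - dist z x))) ∂μ :=
        lintegral_mono_set hcover
    _ ≤ ∑' j, ∫⁻ x in T j, ENNReal.ofReal (Real.exp (-b * (r - dist z x))) ∂μ :=
        lintegral_iUnion_le _ _
    _ ≤ ∑' j : ℕ, (ENNReal.ofReal (Real.exp (-(1:ℝ)/2))) ^ j * ENNReal.ofReal E :=
        ENNReal.tsum_le_tsum hterm
    _ ≤ 3 * ENNReal.ofReal E := geom_aux _
    _ = ENNReal.ofReal (3 * (2 ^ (2*n) * C₁) * r ^ (2*n-1) / b) := by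
        rw [show (3:ENNReal) = ENNReal.ofReal 3 by norm_num,
          ← ENNReal.ofReal_mul (by norm_num)]
        congr 1
        rw [hE]
        ring

/-- `L¹` off-diagonal decay, part (ii): if `μ(B(x,ρ)) ≤ C₁ ρ^{2n}`, the shell bound
`μ(B(x,ρ+t) ∖ B(x,ρ)) ≤ C₁ ρ^{2n−1} t` holds, and `|K(x,y)| ≤ C₂ k^n e^{−c √k d(x,y)}`, then
there is `A`, depending only on `n, C₁, C₂, c`, such that for all `z` and `R > 0`, with
`Ω = B(z, R/√k)`, one has `k^n ∬_{Ω×Ωᶜ} |K(x,y)| dμ dμ ≤ A R^{2n−1}`. -/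
theorem stmt_15 (n : ℕ) (hn : 1 ≤ n) (C₁ C₂ c : ℝ)
    (hC₁ : 0 < C₁) (hC₂ : 0 < C₂) (hc : 0 < c) :
    ∃ A : ℝ, 0 < A ∧
      ∀ (X : Type) [MetricSpace X] [MeasurableSpace X] [BorelSpace X] (μ : Measure X),
        (∀ (x : X) (ρ : ℝ), 0 < ρ →
          μ (Metric.ball x ρ) ≤ ENNReal.ofReal (C₁ * ρ ^ (2 * n))) →
        (∀ (x : X) (ρ t : ℝ), 0 < t → t ≤ ρ →
          μ (Metric.ball x (ρ + t) \ Metric.ball x ρ)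
            ≤ ENNReal.ofReal (C₁ * ρ ^ (2 * n - 1) * t)) →
        ∀ (k : ℝ), 1 ≤ k →
          ∀ (K : X → X → ℂ), Measurable (Function.uncurry K) →
            (∀ x y : X, ‖K x y‖ ≤ C₂ * k ^ n * Real.exp (-c * Real.sqrt k * dist x y)) →
            ∀ (z : X) (R : ℝ), 0 < R →
              k ^ n * ∫ x in Metric.ball z (R / Real.sqrt k),
                  ∫ y in (Metric.ball z (R / Real.sqrt k))ᶜ, ‖K x y‖ ∂μ ∂μ
                ≤ A * R ^ (2 * n - 1) := by
  set m := 2 * n - 1 with hmdef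
  have hm1 : m + 1 = 2 * n := by omega
  set Cm : ℝ := 2 ^ m * (m.factorial : ℝ) with hCmdef
  have hCm0 : 0 < Cm := by positivity
  refine ⟨9 * C₂ * C₁ ^ 2 * Cm * 2 ^ (2 * m + 3) / c ^ (m + 2), by positivity, ?_⟩
  intro X _ _ _ μ hball hshell k hk K hKmeas hKbd z R hR
  set A := 9 * C₂ * C₁ ^ 2 * Cm * 2 ^ (2 * m + 3) / c ^ (m + 2) with hAdef
  set sk := Real.sqrt k with hskdef
  have hk0 : (0:ℝ) < k := lt_of_lt_of_le one_pos hk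
  have hsk1 : 1 ≤ sk := by
    rw [hskdef, show (1:ℝ) = Real.sqrt 1 by rw [Real.sqrt_one]]
    exact Real.sqrt_le_sqrt hk
  have hsk0 : 0 < sk := lt_of_lt_of_le one_pos hsk1
  have hsk2 : sk ^ 2 = k := Real.sq_sqrt hk0.le
  have hkn0 : (0:ℝ) < k ^ n := by positivity
  set r := R / sk with hrdef
  have hr : 0 < r := div_pos hR hsk0
  set b := c * sk / 2 with hbdef
  have hb : 0 < b := by positivity
  set Din : ℝ := 3 * (C₁ * Cm) / b ^ (2 * n) with hDindef
  have hDin0 : 0 ≤ Din := by positivity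
  set M : ℝ := C₂ * k ^ n * Din with hMdef
  have hM0 : 0 ≤ M := by positivity
  set Eout : ℝ := 3 * (2 ^ (2 * n) * C₁) * r ^ m / b with hEoutdef
  have hEout0 : 0 ≤ Eout := by positivity
  set Ω := Metric.ball z r with hΩdef
  -- inner lintegral bound
  have hinner : ∀ x : X, ∫⁻ y, ENNReal.ofReal (Real.exp (-b * dist x y)) ∂μ
      ≤ ENNReal.ofReal Din := by
    intro x
    have := lemma_inner μ n hn C₁ hC₁ hball hshell b hb x
    rwa [hDindef, hCmdef, hmdef]
  -- integrability of exp kernel on restricted measures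
  have hexp_cont : ∀ x : X, Continuous (fun y : X => Real.exp (-b * dist x y)) := by
    intro x
    exact Real.continuous_exp.comp ((continuous_const.mul (continuous_const.dist continuous_id)))
  have hexp_int : ∀ (x : X) (s : Set X),
      Integrable (fun y : X => Real.exp (-b * dist x y)) (μ.restrict s) := by
    intro x s
    refine ⟨(hexp_cont x).aestronglyMeasurable, ?_⟩
    rw [hasFiniteIntegral_iff_ofReal (Filter.Eventually.of_forall fun y => (Real.exp_pos _).le)]
    calc ∫⁻ y in s, ENNReal.ofReal (Real.exp (-b * dist x y)) ∂μ
        ≤ ∫⁻ y, ENNReal.ofReal (Real.exp (-b * dist x y)) ∂μ := setLIntegral_le_lintegral _ _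
      _ ≤ ENNReal.ofReal Din := hinner x
      _ < ⊤ := ENNReal.ofReal_lt_top
  -- inner set integral bound
  have hinner_int : ∀ x : X, ∫ y in Ωᶜ, Real.exp (-b * dist x y) ∂μ ≤ Din := by
    intro x
    rw [integral_eq_lintegral_of_nonneg_ae
      (Filter.Eventually.of_forall fun y => (Real.exp_pos _).le)
      (hexp_cont x).aestronglyMeasurable]
    apply ENNReal.toReal_le_of_le_ofReal hDin0
    calc ∫⁻ y in Ωᶜ, ENNReal.ofReal (Real.exp (-b * dist x y)) ∂μ
        ≤ ∫⁻ y, ENNReal.ofReal (Real.exp (-b * dist x y)) ∂μ := setLIntegral_le_lintegral _ _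
      _ ≤ ENNReal.ofReal Din := hinner x
  set F : X → ℝ := fun x => M * Real.exp (-b * (r - dist z x)) with hFdef
  -- pointwise bound on inner integral
  have hfle : ∀ x ∈ Ω, (∫ y in Ωᶜ, ‖K x y‖ ∂μ) ≤ F x := by
    intro x hx
    rw [hΩdef, Metric.mem_ball, dist_comm] at hx
    set s : ℝ := r - dist z x with hsdef
    have hs0 : 0 < s := by simp only [hsdef]; linarith
    have hptwise : ∀ y ∈ Ωᶜ, ‖K x y‖
        ≤ (C₂ * k ^ n * Real.exp (-b * s)) * Real.exp (-b * dist x y) := by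
      intro y hy
      have hyd : r ≤ dist z y := by
        rw [hΩdef] at hy
        simp only [Set.mem_compl_iff, Metric.mem_ball, not_lt, dist_comm] at hy
        exact hy
      have hdxy : s ≤ dist x y := by
        have htri : dist z y ≤ dist z x + dist x y := dist_triangle z x y
        simp only [hsdef]; linarith
      calc ‖K x y‖ ≤ C₂ * k ^ n * Real.exp (-c * sk * dist x y) := hKbd x y
        _ ≤ C₂ * k ^ n * (Real.exp (-b * s) * Real.exp (-b * dist x y)) := by
            apply mul_le_mul_of_nonneg_left _ (by positivity)
            rw [← Real.exp_add]
            apply Real.exp_le_exp.mpr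
            have hcsk : c * sk = 2 * b := by rw [hbdef]; ring
            nlinarith [mul_le_mul_of_nonneg_left hdxy hb.le]
        _ = (C₂ * k ^ n * Real.exp (-b * s)) * Real.exp (-b * dist x y) := by ring
    calc (∫ y in Ωᶜ, ‖K x y‖ ∂μ)
        ≤ ∫ y in Ωᶜ, (C₂ * k ^ n * Real.exp (-b * s)) * Real.exp (-b * dist x y) ∂μ := by
          apply integral_mono_of_nonneg
            (Filter.Eventually.of_forall fun y => norm_nonneg _)
            ((hexp_int x Ωᶜ).const_mul _)
          exact ae_restrict_of_forall_mem Metric.isOpen_ball.measurableSet.compl hptwise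
      _ = (C₂ * k ^ n * Real.exp (-b * s)) * ∫ y in Ωᶜ, Real.exp (-b * dist x y) ∂μ :=
          integral_const_mul _ _
      _ ≤ (C₂ * k ^ n * Real.exp (-b * s)) * Din :=
          mul_le_mul_of_nonneg_left (hinner_int x) (by positivity)
      _ = F x := by rw [hFdef, hMdef, hsdef]; ring
  -- integrability of F on Ω
  have houter_cont : Continuous (fun x : X => Real.exp (-b * (r - dist z x))) :=
    Real.continuous_exp.comp (continuous_const.mul
      (continuous_const.sub (continuous_const.dist continuous_id)))
  have houter_lint : ∫⁻ x in Ω, ENNReal.ofReal (Real.exp (-b * (r - dist z x))) ∂μ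
      ≤ ENNReal.ofReal Eout := by
    have := lemma_outer μ n hn C₁ hC₁ hball hshell b hb z r hr
    rwa [hEoutdef, hmdef, hΩdef]
  have hFint : Integrable F (μ.restrict Ω) := by
    apply Integrable.const_mul
    refine ⟨houter_cont.aestronglyMeasurable, ?_⟩
    rw [hasFiniteIntegral_iff_ofReal (Filter.Eventually.of_forall fun y => (Real.exp_pos _).le)]
    exact lt_of_le_of_lt houter_lint ENNReal.ofReal_lt_top
  -- outer integral bound
  have houter_int : ∫ x in Ω, Real.exp (-b * (r - dist z x)) ∂μ ≤ Eout := by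
    rw [integral_eq_lintegral_of_nonneg_ae
      (Filter.Eventually.of_forall fun y => (Real.exp_pos _).le)
      houter_cont.aestronglyMeasurable]
    exact ENNReal.toReal_le_of_le_ofReal hEout0 houter_lint
  have hmain : (∫ x in Ω, ∫ y in Ωᶜ, ‖K x y‖ ∂μ ∂μ) ≤ M * Eout := by
    calc (∫ x in Ω, ∫ y in Ωᶜ, ‖K x y‖ ∂μ ∂μ) ≤ ∫ x in Ω, F x ∂μ := by
          apply integral_mono_of_nonneg
            (Filter.Eventually.of_forall fun x => integral_nonneg fun y => norm_nonneg _)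
            hFint
          exact ae_restrict_of_forall_mem Metric.isOpen_ball.measurableSet hfle
      _ = M * ∫ x in Ω, Real.exp (-b * (r - dist z x)) ∂μ := integral_const_mul _ _
      _ ≤ M * Eout := mul_le_mul_of_nonneg_left houter_int hM0
  -- final arithmetic
  have hkn : k ^ n = sk ^ (m + 1) := by rw [hm1, ← hsk2, ← pow_mul, mul_comm 2 n, pow_mul]
  have key : k ^ n * (M * Eout) = A * R ^ m := by
    rw [hMdef, hEoutdef, hDindef, hAdef, hrdef, hbdef, hkn, div_pow, mul_pow]
    rw [show 2 * n = m + 1 from hm1.symm]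
    have hskne : sk ≠ 0 := hsk0.ne'
    field_simp
    have h1 : sk ^ m * sk⁻¹ ^ m = 1 := by rw [← mul_pow, mul_inv_cancel₀ hskne, one_pow]
    linear_combination (sk * R ^ m * c ^ 2 * c ^ m * 2 ^ (m * 2) * 72) * h1
  calc k ^ n * ∫ x in Ω, ∫ y in Ωᶜ, ‖K x y‖ ∂μ ∂μ
      ≤ k ^ n * (M * Eout) := mul_le_mul_of_nonneg_left hmain hkn0.le
    _ = A * R ^ m := key
end

section
/- Let (X, d) be a metric space of finite diameter, μ a finite Borel measure on X, and N ≥ 1. Let s_1, …, s_N : X → ℂ be square-integrable measurable functions forming an orthonormal family in L²(X, μ; ℂ), let H be their pointwise linear span and Π(x, y) = Σ_{j=1}^N s_j(x)·conj(s_j(y)). Let x_1, …, x_N ∈ X and suppose there exist ℓ_1, …, ℓ_N ∈ H with ℓ_j(x_i) = δ_{ij} for all i, j and sup_{x∈X} |ℓ_j(x)| ≤ 1 for all j. Let ε ≥ 0 satisfy ∫_X d(x_j, y) |Π(y, x_j)| dμ(y) ≤ ε for every j = 1, …, N. Then for every function f : X → ℝ with |f(x) − f(y)| ≤ d(x, y)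 for all x, y ∈ X: |(1/N) Σ_{j=1}^N f(x_j) − (1/N) ∫_X f(y) Π(y, y) dμ(y)| ≤ ε. -/
open MeasureTheory

private lemma aux_int_mul_conj {X : Type*} [MeasurableSpace X] {μ : Measure X} {f g : X → ℂ}
    (hf : MemLp f 2 μ) (hg : MemLp g 2 μ) (hgm : Measurable g) :
    Integrable (fun y => f y * (starRingEnd ℂ) (g y)) μ := by
  have hg' : MemLp (fun y => (starRingEnd ℂ) (g y)) 2 μ :=
    hg.of_le (Complex.continuous_conj.measurable.comp hgm).aestronglyMeasurable
      (Filter.Eventually.of_forall fun y => by simp)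
  have := hf.smul (E := ℂ) (𝕜 := ℂ) hg' (p := 2) (q := 2) (r := 1)
  rw [memLp_one_iff_integrable] at this
  exact this.congr (Filter.Eventually.of_forall fun y => by simp [mul_comm])

/-- Core of the Wasserstein upper bound: if `s_1, …, s_N` is an orthonormal family in
`L²(X, μ; ℂ)` with kernel `Π`, the points `x_j` admit Lagrange functions `ℓ_j` in the span
with `ℓ_j(x_i) = δ_{ij}` and `sup |ℓ_j| ≤ 1`, and `∫ d(x_j, y) |Π(y, x_j)| dμ(y) ≤ ε` for all
`j`, then for every `1`-Lipschitz `f : X → ℝ`,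
`|(1/N) ∑_j f(x_j) − (1/N) ∫ f(y) Π(y,y) dμ(y)| ≤ ε`. -/
theorem stmt_19 {X : Type*} [MetricSpace X] [MeasurableSpace X] [BorelSpace X]
    (hdiam : ∃ D : ℝ, ∀ x y : X, dist x y ≤ D)
    (μ : Measure X) [IsFiniteMeasure μ]
    (N : ℕ) (hN : 1 ≤ N) (s : Fin N → X → ℂ)
    (hmeas : ∀ j, Measurable (s j)) (hs2 : ∀ j, MemLp (s j) 2 μ)
    (hon : ∀ i j, ∫ y, s i y * (starRingEnd ℂ) (s j y) ∂μ = if i = j then 1 else 0)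
    (x : Fin N → X) (ℓ : Fin N → X → ℂ)
    (hmem : ∀ j, ℓ j ∈ Submodule.span ℂ (Set.range s))
    (hdelta : ∀ i j, ℓ j (x i) = if i = j then 1 else 0)
    (hbound : ∀ (j : Fin N) (z : X), ‖ℓ j z‖ ≤ 1)
    (ε : ℝ) (hε : 0 ≤ ε)
    (hker : ∀ j, ∫ y, dist (x j) y *
      ‖∑ i, s i y * (starRingEnd ℂ) (s i (x j))‖ ∂μ ≤ ε)
    (f : X → ℝ) (hflip : ∀ a b : X, |f a - f b| ≤ dist a b) :
    |(1 / (N : ℝ)) * ∑ j, f (x j)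
        - (1 / (N : ℝ)) * ∫ y, f y * ∑ j, ‖s j y‖ ^ 2 ∂μ| ≤ ε := by
  classical
  obtain ⟨D, hD⟩ := hdiam
  have hfm : Measurable f := by
    have hlip : LipschitzWith 1 f := LipschitzWith.of_dist_le_mul fun a b => by
      rw [Real.dist_eq]; simpa using hflip a b
    exact hlip.continuous.measurable
  -- coefficients of ℓ j in terms of s
  have hrep : ∀ j, ∃ cj : Fin N → ℂ, ∀ y, ℓ j y = ∑ i, cj i * s i y := by
    intro j
    obtain ⟨cj, hcj⟩ := (Submodule.mem_span_range_iff_exists_fun ℂ).mp (hmem j)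
    refine ⟨cj, fun y => ?_⟩
    rw [← hcj]; simp [Finset.sum_apply]
  choose c hc using hrep
  have hlm : ∀ j, Measurable (ℓ j) := by
    intro j
    have h : ℓ j = fun y => ∑ i, c j i * s i y := funext (hc j)
    rw [h]
    exact Finset.measurable_sum _ fun i _ => (hmeas i).const_mul _
  -- matrix identities
  have hCS : (Matrix.of fun j i => c j i) * (Matrix.of fun i k => s i (x k)) = 1 := by
    ext j k
    have h1 := hdelta k j
    rw [hc] at h1
    simpa [Matrix.mul_apply, Matrix.one_apply, eq_comm] using h1
  have hSC := mul_eq_one_comm.mp hCS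
  have hSCe : ∀ i m, (∑ j, s i (x j) * c j m) = if i = m then 1 else 0 := by
    intro i m
    have h := congrFun (congrFun hSC i) m
    simpa [Matrix.mul_apply, Matrix.one_apply] using h
  have hkey : ∀ i y, ∑ j, s i (x j) * ℓ j y = s i y := by
    intro i y
    calc ∑ j, s i (x j) * ℓ j y = ∑ j, ∑ m, s i (x j) * c j m * s m y := by
          simp_rw [hc, Finset.mul_sum, mul_assoc]
      _ = ∑ m, (∑ j, s i (x j) * c j m) * s m y := by
          rw [Finset.sum_comm]; simp_rw [Finset.sum_mul]
      _ = s i y := by simp [hSCe, ite_mul]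
  -- basic integrability
  have hconjint : ∀ i m, Integrable (fun y => s i y * (starRingEnd ℂ) (s m y)) μ :=
    fun i m => aux_int_mul_conj (hs2 i) (hs2 m) (hmeas m)
  set K : Fin N → X → ℂ := fun j y => ∑ i, (starRingEnd ℂ) (s i y) * s i (x j) with hK
  have hsint : ∀ i, Integrable (s i) μ := fun i => (hs2 i).integrable one_le_two
  have hconjsint : ∀ i, Integrable (fun y => (starRingEnd ℂ) (s i y)) μ := by
    intro i
    refine (hsint i).norm.mono' (Complex.continuous_conj.measurable.comp (hmeas i)).aestronglyMeasurable
      (Filter.Eventually.of_forall fun y => by simp)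
  have hKint : ∀ j, Integrable (K j) μ := by
    intro j
    exact integrable_finset_sum _ fun i _ => (hconjsint i).mul_const _
  have hℓK : ∀ j, Integrable (fun y => ℓ j y * K j y) μ := fun j =>
    (hKint j).bdd_mul (hlm j).aestronglyMeasurable (Filter.Eventually.of_forall (hbound j))
  have hℓconj : ∀ j i, Integrable (fun y => ℓ j y * (starRingEnd ℂ) (s i y)) μ := fun j i =>
    (hconjsint i).bdd_mul (hlm j).aestronglyMeasurable (Filter.Eventually.of_forall (hbound j))
  -- reproducing coefficients
  have hrepro : ∀ j i, ∫ y, ℓ j y * (starRingEnd ℂ) (s i y) ∂μ = c j i := by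
    intro j i
    calc ∫ y, ℓ j y * (starRingEnd ℂ) (s i y) ∂μ
        = ∫ y, ∑ m, c j m * (s m y * (starRingEnd ℂ) (s i y)) ∂μ := by
          congr 1; funext y; rw [hc, Finset.sum_mul]; simp [mul_assoc]
      _ = ∑ m, ∫ y, c j m * (s m y * (starRingEnd ℂ) (s i y)) ∂μ :=
          integral_finset_sum _ fun m _ => (hconjint m i).const_mul _
      _ = ∑ m, c j m * ∫ y, s m y * (starRingEnd ℂ) (s i y) ∂μ := by
          simp_rw [integral_const_mul]
      _ = c j i := by simp_rw [hon]; simp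
  -- mass one
  have hA : ∀ j, ∫ y, ℓ j y * K j y ∂μ = 1 := by
    intro j
    calc ∫ y, ℓ j y * K j y ∂μ
        = ∫ y, ∑ i, (ℓ j y * (starRingEnd ℂ) (s i y)) * s i (x j) ∂μ := by
          congr 1; funext y
          rw [hK]; simp only [Finset.mul_sum]
          exact Finset.sum_congr rfl fun i _ => by ring
      _ = ∑ i, ∫ y, (ℓ j y * (starRingEnd ℂ) (s i y)) * s i (x j) ∂μ :=
          integral_finset_sum _ fun i _ => (hℓconj j i).mul_const _
      _ = ∑ i, (∫ y, ℓ j y * (starRingEnd ℂ) (s i y) ∂μ) * s i (x j) := by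
          simp_rw [integral_mul_const]
      _ = ∑ i, c j i * s i (x j) := by simp_rw [hrepro]
      _ = 1 := by rw [← hc j (x j)]; simpa using hdelta j j
  -- pointwise identity
  have hB : ∀ y, ∑ j, ℓ j y * K j y = ((∑ i, ‖s i y‖ ^ 2 : ℝ) : ℂ) := by
    intro y
    calc ∑ j, ℓ j y * K j y
        = ∑ j, ∑ i, (starRingEnd ℂ) (s i y) * (s i (x j) * ℓ j y) := by
          refine Finset.sum_congr rfl fun j _ => ?_
          rw [hK]; simp only [Finset.mul_sum]
          exact Finset.sum_congr rfl fun i _ => by ring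
      _ = ∑ i, (starRingEnd ℂ) (s i y) * ∑ j, s i (x j) * ℓ j y := by
          rw [Finset.sum_comm]; simp_rw [Finset.mul_sum]
      _ = ∑ i, (starRingEnd ℂ) (s i y) * s i y := by simp_rw [hkey]
      _ = ((∑ i, ‖s i y‖ ^ 2 : ℝ) : ℂ) := by
          push_cast
          refine Finset.sum_congr rfl fun i _ => ?_
          rw [mul_comm, Complex.mul_conj']
  -- boundedness of f
  have hfB : ∀ y : X, ‖((f y : ℂ))‖ ≤ |f (x ⟨0, hN⟩)| + D := by
    intro y
    rw [Complex.norm_real, Real.norm_eq_abs]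
    have h1 := hflip y (x ⟨0, hN⟩)
    have h2 := hD y (x ⟨0, hN⟩)
    have h3 : |f y| - |f (x ⟨0, hN⟩)| ≤ |f y - f (x ⟨0, hN⟩)| := abs_sub_abs_le_abs_sub _ _
    linarith
  have hfmC : Measurable fun y => ((f y : ℂ)) := Complex.measurable_ofReal.comp hfm
  -- main integrabilities
  have hfℓK : ∀ j, Integrable (fun y => ((f y : ℂ)) * (ℓ j y * K j y)) μ := fun j =>
    (hℓK j).bdd_mul hfmC.aestronglyMeasurable (Filter.Eventually.of_forall hfB)
  have hdiffint : ∀ j, Integrable (fun y => (((f (x j) : ℂ)) - (f y : ℂ)) * (ℓ j y * K j y)) μ := by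
    intro j
    refine (hℓK j).bdd_mul (measurable_const.sub hfmC).aestronglyMeasurable (c := D) (Filter.Eventually.of_forall fun y => ?_)
    have : (((f (x j) : ℂ)) - (f y : ℂ)) = ((f (x j) - f y : ℝ) : ℂ) := by push_cast; ring
    rw [this, Complex.norm_real, Real.norm_eq_abs]
    exact (hflip (x j) y).trans (hD _ _)
  -- each term equals f(x j) minus an integral
  have hIeq : ∀ j, (∫ y, (((f (x j) : ℂ)) - (f y : ℂ)) * (ℓ j y * K j y) ∂μ)
      = ((f (x j) : ℂ)) - ∫ y, ((f y : ℂ)) * (ℓ j y * K j y) ∂μ := by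
    intro j
    have h1 : Integrable (fun y => ((f (x j) : ℂ)) * (ℓ j y * K j y)) μ :=
      (hℓK j).const_mul _
    calc ∫ y, (((f (x j) : ℂ)) - (f y : ℂ)) * (ℓ j y * K j y) ∂μ
        = ∫ y, (((f (x j) : ℂ)) * (ℓ j y * K j y) - ((f y : ℂ)) * (ℓ j y * K j y)) ∂μ := by
          congr 1; funext y; ring
      _ = (∫ y, ((f (x j) : ℂ)) * (ℓ j y * K j y) ∂μ)
          - ∫ y, ((f y : ℂ)) * (ℓ j y * K j y) ∂μ := integral_sub h1 (hfℓK j)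
      _ = ((f (x j) : ℂ)) - ∫ y, ((f y : ℂ)) * (ℓ j y * K j y) ∂μ := by
          rw [integral_const_mul, hA j, mul_one]
  -- the sum identity
  have hsum : ∑ j, (∫ y, (((f (x j) : ℂ)) - (f y : ℂ)) * (ℓ j y * K j y) ∂μ)
      = (((∑ j, f (x j)) - ∫ y, f y * ∑ i, ‖s i y‖ ^ 2 ∂μ : ℝ) : ℂ) := by
    simp_rw [hIeq]
    rw [Finset.sum_sub_distrib]
    have h3 : ∑ j, ∫ y, ((f y : ℂ)) * (ℓ j y * K j y) ∂μ
        = ∫ y, ((f y : ℂ)) * ∑ j, (ℓ j y * K j y) ∂μ := by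
      rw [← integral_finset_sum _ fun j _ => hfℓK j]
      congr 1; funext y; rw [Finset.mul_sum]
    rw [h3]
    have h4 : (fun y => ((f y : ℂ)) * ∑ j, (ℓ j y * K j y))
        = fun y => (((f y * ∑ i, ‖s i y‖ ^ 2 : ℝ)) : ℂ) := by
      funext y; rw [hB y]; push_cast; ring
    rw [h4, show (∫ y, ((f y * ∑ i, ‖s i y‖ ^ 2 : ℝ) : ℂ) ∂μ)
        = ((∫ y, f y * ∑ i, ‖s i y‖ ^ 2 ∂μ : ℝ) : ℂ) from integral_ofReal]
    push_cast
    ring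
  -- bound on each term
  have hIb : ∀ j, ‖∫ y, (((f (x j) : ℂ)) - (f y : ℂ)) * (ℓ j y * K j y) ∂μ‖ ≤ ε := by
    intro j
    have hPint : Integrable (fun y => ∑ i, s i y * (starRingEnd ℂ) (s i (x j))) μ :=
      integrable_finset_sum _ fun i _ => (hsint i).mul_const _
    have hgint : Integrable
        (fun y => dist (x j) y * ‖∑ i, s i y * (starRingEnd ℂ) (s i (x j))‖) μ := by
      refine hPint.norm.bdd_mul (c := D) ?_ (Filter.Eventually.of_forall fun y => ?_)
      · exact (continuous_const.dist continuous_id).aestronglyMeasurable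
      · rw [Real.norm_eq_abs, abs_of_nonneg dist_nonneg]; exact hD _ _
    refine le_trans (norm_integral_le_of_norm_le hgint
      (Filter.Eventually.of_forall fun y => ?_)) (hker j)
    have hKP : K j y = (starRingEnd ℂ) (∑ i, s i y * (starRingEnd ℂ) (s i (x j))) := by
      rw [map_sum]
      exact Finset.sum_congr rfl fun i _ => by simp [mul_comm]
    have hd : ‖(((f (x j) : ℂ)) - (f y : ℂ))‖ ≤ dist (x j) y := by
      have : (((f (x j) : ℂ)) - (f y : ℂ)) = ((f (x j) - f y : ℝ) : ℂ) := by push_cast; ring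
      rw [this, Complex.norm_real, Real.norm_eq_abs]
      exact hflip (x j) y
    calc ‖(((f (x j) : ℂ)) - (f y : ℂ)) * (ℓ j y * K j y)‖
        = ‖(((f (x j) : ℂ)) - (f y : ℂ))‖ * (‖ℓ j y‖ * ‖K j y‖) := by
          rw [norm_mul, norm_mul]
      _ ≤ dist (x j) y * (1 * ‖K j y‖) :=
          mul_le_mul hd (mul_le_mul_of_nonneg_right (hbound j y) (norm_nonneg _))
            (by positivity) dist_nonneg
      _ = dist (x j) y * ‖∑ i, s i y * (starRingEnd ℂ) (s i (x j))‖ := by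
          rw [one_mul, hKP, RCLike.norm_conj]
  -- conclusion
  have hZ : |(∑ j, f (x j)) - ∫ y, f y * ∑ i, ‖s i y‖ ^ 2 ∂μ| ≤ (N : ℝ) * ε := by
    calc |(∑ j, f (x j)) - ∫ y, f y * ∑ i, ‖s i y‖ ^ 2 ∂μ|
        = ‖((((∑ j, f (x j)) - ∫ y, f y * ∑ i, ‖s i y‖ ^ 2 ∂μ : ℝ)) : ℂ)‖ := by
          rw [Complex.norm_real, Real.norm_eq_abs]
      _ = ‖∑ j, (∫ y, (((f (x j) : ℂ)) - (f y : ℂ)) * (ℓ j y * K j y) ∂μ)‖ := by rw [hsum]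
      _ ≤ ∑ j, ‖∫ y, (((f (x j) : ℂ)) - (f y : ℂ)) * (ℓ j y * K j y) ∂μ‖ :=
          norm_sum_le _ _
      _ ≤ ∑ _j : Fin N, ε := Finset.sum_le_sum fun j _ => hIb j
      _ = (N : ℝ) * ε := by simp [Finset.sum_const, nsmul_eq_mul]
  have hN' : (0 : ℝ) < N := by exact_mod_cast Nat.lt_of_lt_of_le Nat.zero_lt_one hN
  rw [← mul_sub, abs_mul, abs_of_nonneg (by positivity : (0:ℝ) ≤ 1 / (N:ℝ))]
  calc (1 / (N : ℝ)) * |(∑ j, f (x j)) - ∫ y, f y * ∑ j, ‖s j y‖ ^ 2 ∂μ|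
      ≤ (1 / (N : ℝ)) * ((N : ℝ) * ε) := by
        refine mul_le_mul_of_nonneg_left ?_ (by positivity)
        exact hZ
    _ = ε := by field_simp
end
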